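/- arXiv:1511.01210 — 9 statements merged into one kernel-verified Lean document; each statement's English description precedes it below -/
import Mathlib

section
/- If m and n are coprime positive integers (each at least 2), then π(m·n) = lcm(π(m), π(n)). -/
/-- The Pisano period `π(m)`: the least positive integer `k` such that
`F_{n+k} ≡ F_n (mod m)` for all `n ≥ 0`. -/
noncomputable def pisano (m : ℕ) : ℕ :=
  sInf {k : ℕ | 0 < k ∧ ∀ n : ℕ, Nat.fib (n + k) ≡ Nat.fib n [MOD m]}

/-- Periodicity property. -/
def FibPer (m k : ℕ) : Prop := ∀ n : ℕ, Nat.fib (n + k) ≡ Nat.fib n [MOD m]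

lemma fibPer_mul (m k : ℕ) (hk : FibPer m k) : ∀ q, FibPer m (q * k) := by
  intro q
  induction q with
  | zero => intro n; simp [Nat.ModEq.refl]
  | succ q ih =>
    intro n
    have : n + (q + 1) * k = (n + q * k) + k := by ring
    rw [this]
    exact (hk (n + q * k)).trans (ih n)

/-- From agreement at two consecutive indices, the period propagates everywhere. -/
lemma fibPer_of_two (m k i : ℕ)
    (h0 : Nat.fib (i + k) ≡ Nat.fib i [MOD m])
    (h1 : Nat.fib (i + 1 + k) ≡ Nat.fib (i + 1) [MOD m]) : FibPer m k := by
  -- P a : agreement at a and a+1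
  set P : ℕ → Prop := fun a =>
    Nat.fib (a + k) ≡ Nat.fib a [MOD m] ∧ Nat.fib (a + 1 + k) ≡ Nat.fib (a + 1) [MOD m] with hP
  have hPi : P i := ⟨h0, h1⟩
  have step : ∀ a, P a → P (a + 1) := by
    intro a ⟨ha, ha1⟩
    refine ⟨ha1, ?_⟩
    have e1 : a + 1 + 1 + k = (a + k) + 2 := by ring
    have e2 : a + 1 + 1 = a + 2 := by ring
    rw [e1, e2, Nat.fib_add_two, Nat.fib_add_two]
    have e3 : a + k + 1 = a + 1 + k := by ring
    rw [e3]
    exact ha.add ha1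
  have back : ∀ a, P (a + 1) → P a := by
    intro a ⟨ha1, ha2⟩
    refine ⟨?_, ha1⟩
    have e1 : a + 1 + 1 + k = (a + k) + 2 := by ring
    have e2 : a + 1 + 1 = a + 2 := by ring
    rw [e1, e2, Nat.fib_add_two, Nat.fib_add_two] at ha2
    have e3 : a + k + 1 = a + 1 + k := by ring
    rw [e3] at ha2
    exact Nat.ModEq.add_right_cancel ha1 ha2
  have up : ∀ j, P (i + j) := by
    intro j; induction j with
    | zero => exact hPi
    | succ j ih => exact step _ ih
  have down : ∀ d, P (i - d) := by
    intro d; induction d with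
    | zero => simpa using hPi
    | succ d ih =>
      by_cases hd : d + 1 ≤ i
      · apply back
        have : i - (d + 1) + 1 = i - d := by omega
        rw [this]; exact ih
      · have : i - (d + 1) = i - d := by omega
        rw [this]; exact ih
  intro a
  rcases le_or_gt i a with hle | hlt
  · obtain ⟨j, rfl⟩ := Nat.exists_eq_add_of_le hle
    exact (up j).1
  · have : a = i - (i - a) := by omega
    rw [this]; exact (down (i - a)).1

lemma fibPer_exists (m : ℕ) (hm : 2 ≤ m) : ∃ k, 0 < k ∧ FibPer m k := by
  have : NeZero m := ⟨by omega⟩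
  have : ∃ x y : ℕ, x ≠ y ∧
      ((Nat.fib x : ZMod m), (Nat.fib (x+1) : ZMod m)) = ((Nat.fib y : ZMod m), (Nat.fib (y+1) : ZMod m)) :=
    Finite.exists_ne_map_eq_of_infinite (fun x => ((Nat.fib x : ZMod m), (Nat.fib (x+1) : ZMod m)))
  obtain ⟨x, y, hxy, heq⟩ := this
  wlog hlt : x < y generalizing x y
  · exact this y x hxy.symm heq.symm (by omega)
  refine ⟨y - x, by omega, ?_⟩
  have e : x + (y - x) = y := by omega
  have h0 : Nat.fib (x + (y - x)) ≡ Nat.fib x [MOD m] := by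
    rw [e]
    exact (ZMod.natCast_eq_natCast_iff _ _ _).mp (congrArg Prod.fst heq).symm
  have h1 : Nat.fib (x + 1 + (y - x)) ≡ Nat.fib (x + 1) [MOD m] := by
    have : x + 1 + (y - x) = y + 1 := by omega
    rw [this]
    exact (ZMod.natCast_eq_natCast_iff _ _ _).mp (congrArg Prod.snd heq).symm
  exact fibPer_of_two m (y - x) x h0 h1

lemma pisano_pos (m : ℕ) (hm : 2 ≤ m) : 0 < pisano m ∧ FibPer m (pisano m) := by
  have hne : {k : ℕ | 0 < k ∧ FibPer m k}.Nonempty := fibPer_exists m hm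
  have := Nat.sInf_mem hne
  exact this

lemma fibPer_iff_dvd (m k : ℕ) (hm : 2 ≤ m) (hk : 0 < k) :
    FibPer m k ↔ pisano m ∣ k := by
  obtain ⟨hp, hper⟩ := pisano_pos m hm
  constructor
  · intro hFk
    set p := pisano m with hpdef
    have hr : FibPer m (k % p) := by
      intro a
      have e : a + k = (a + k % p) + (k / p) * p := by
        have := Nat.mod_add_div' k p; omega
      have h1 := fibPer_mul m p hper (k / p) (a + k % p)
      have h2 := hFk a
      rw [e] at h2
      exact (h1.symm.trans h2)
    by_contra hdvd
    have hrpos : 0 < k % p := Nat.pos_of_ne_zero (fun h0 => hdvd (Nat.dvd_of_mod_eq_zero h0))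
    have : p ≤ k % p := Nat.sInf_le ⟨hrpos, hr⟩
    have : k % p < p := Nat.mod_lt _ hp
    omega
  · rintro ⟨q, rfl⟩
    have : q * pisano m = pisano m * q := Nat.mul_comm _ _
    exact (Nat.mul_comm _ _) ▸ fibPer_mul m (pisano m) hper q

/-- if `m` and `n` are coprime integers, each at least 2, then
`π(m·n) = lcm(π(m), π(n))`. -/
theorem pisano_mul_of_coprime (m n : ℕ) (hm : 2 ≤ m) (hn : 2 ≤ n)
    (h : Nat.Coprime m n) :
    pisano (m * n) = Nat.lcm (pisano m) (pisano n) := by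
  obtain ⟨hpm, _⟩ := pisano_pos m hm
  obtain ⟨hpn, _⟩ := pisano_pos n hn
  have hmn : 2 ≤ m * n := by nlinarith
  have hset : ∀ k, 0 < k → (FibPer (m * n) k ↔ Nat.lcm (pisano m) (pisano n) ∣ k) := by
    intro k hk
    have : FibPer (m * n) k ↔ FibPer m k ∧ FibPer n k := by
      constructor
      · intro hf
        exact ⟨fun a => (Nat.modEq_and_modEq_iff_modEq_mul h).mpr (hf a) |>.1,
               fun a => (Nat.modEq_and_modEq_iff_modEq_mul h).mpr (hf a) |>.2⟩
      · rintro ⟨h1, h2⟩ a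
        exact (Nat.modEq_and_modEq_iff_modEq_mul h).mp ⟨h1 a, h2 a⟩
    rw [this, fibPer_iff_dvd m k hm hk, fibPer_iff_dvd n k hn hk, Nat.lcm_dvd_iff]
  have hlcm_pos : 0 < Nat.lcm (pisano m) (pisano n) := Nat.lcm_pos hpm hpn
  apply le_antisymm
  · exact Nat.sInf_le ⟨hlcm_pos, (hset _ hlcm_pos).mpr dvd_rfl⟩
  · obtain ⟨hpmn, hfmn⟩ := pisano_pos (m * n) hmn
    exact Nat.le_of_dvd hpmn ((hset _ hpmn).mp hfmn)
end

section
/- If p is a prime with p ≡ 1 (mod 10) or p ≡ 9 (mod 10), then π(p) divides p − 1. -/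
open Function

theorem sInf_periods_dvd {α : Type*} (f : ℕ → α) {k : ℕ} (hk : ∀ n, f (n + k) = f n) :
    sInf {j | 0 < j ∧ ∀ n, f (n + j) = f n} ∣ k := by
  set shift : (ℕ → α) → ℕ → α := fun g n => g (n + 1)
  have iterate_shift : ∀ j, shift^[j] f = fun n => f (n + j) := by
    intro j
    induction j with
    | zero => rfl
    | succ j ih =>
      rw [iterate_succ_apply', ih]
      exact funext fun n => congrArg f (Nat.add_right_comm n 1 j)
  have periods_eq : {j | 0 < j ∧ ∀ n, f (n + j) = f n} = {j > 0 | IsPeriodicPt shift j f} := by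
    ext j
    simp only [IsPeriodicPt, IsFixedPt, iterate_shift, funext_iff]
  have hk_periodic : IsPeriodicPt shift k f := by
    rw [IsPeriodicPt, IsFixedPt, iterate_shift]
    exact funext hk
  rw [periods_eq, ← minimalPeriod_eq_sInf_n_pos_IsPeriodicPt]
  exact hk_periodic.minimalPeriod_dvd

theorem pisano_dvd_of_fib_add_modEq {m k : ℕ} (hk : ∀ n, Nat.fib (n + k) ≡ Nat.fib n [MOD m]) :
    pisano m ∣ k :=
  sInf_periods_dvd (fun n => Nat.fib n % m) hk

section GoldenRoots

variable {R : Type*} [CommRing R] {x y : R}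

theorem pow_succ_eq_fib_mul_add_fib (hx : x ^ 2 = x + 1) (n : ℕ) :
    x ^ (n + 1) = Nat.fib (n + 1) * x + Nat.fib n := by
  induction n with
  | zero => simp
  | succ n ih =>
    rw [pow_succ, ih, Nat.fib_add_two]
    push_cast
    linear_combination (Nat.fib (n + 1) : R) * hx

theorem fib_mul_sub_eq_pow_sub_pow (hx : x ^ 2 = x + 1) (hy : y ^ 2 = y + 1) (n : ℕ) :
    Nat.fib n * (x - y) = x ^ n - y ^ n := by
  cases n with
  | zero => simp
  | succ n =>
    rw [pow_succ_eq_fib_mul_add_fib hx, pow_succ_eq_fib_mul_add_fib hy]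
    ring

theorem fib_eq_zero_and_fib_succ_eq_one [IsDomain R] (hx : x ^ 2 = x + 1) (hy : y ^ 2 = y + 1)
    (hxy : x ≠ y) {k : ℕ} (hxk : x ^ k = 1) (hyk : y ^ k = 1) :
    (Nat.fib k : R) = 0 ∧ (Nat.fib (k + 1) : R) = 1 := by
  have hsub : x - y ≠ 0 := sub_ne_zero.mpr hxy
  constructor
  · have h := fib_mul_sub_eq_pow_sub_pow hx hy k
    rw [hxk, hyk, sub_self] at h
    exact (mul_eq_zero.mp h).resolve_right hsub
  · have h := fib_mul_sub_eq_pow_sub_pow hx hy (k + 1)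
    rw [pow_succ, pow_succ, hxk, hyk, one_mul, one_mul] at h
    exact mul_right_cancel₀ hsub (h.trans (one_mul _).symm)

theorem ne_zero_of_sq_eq_add_one [Nontrivial R] (hx : x ^ 2 = x + 1) : x ≠ 0 := by
  rintro rfl
  simp at hx

end GoldenRoots

theorem Nat.cast_fib_add_eq {R : Type*} [Semiring R] {k : ℕ} (h0 : (Nat.fib k : R) = 0)
    (h1 : (Nat.fib (k + 1) : R) = 1) (n : ℕ) : (Nat.fib (n + k) : R) = Nat.fib n := by
  cases n with
  | zero => simpa using h0
  | succ n =>
    rw [Nat.add_right_comm, Nat.add_comm n k, Nat.fib_add]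
    push_cast
    rw [h0, h1, zero_mul, zero_add, one_mul]

theorem exists_ne_roots_sq_eq_add_one {K : Type*} [Field K] (h2 : (2 : K) ≠ 0) (h5 : (5 : K) ≠ 0)
    (hsq : IsSquare (5 : K)) : ∃ x y : K, x ^ 2 = x + 1 ∧ y ^ 2 = y + 1 ∧ x ≠ y := by
  obtain ⟨s, hs⟩ := hsq
  refine ⟨(1 + s) / 2, (1 - s) / 2, ?_, ?_, ?_⟩
  · field_simp
    linear_combination -hs
  · field_simp
    linear_combination -hs
  · intro h
    have h2s : 2 * s = 0 := by
      rw [div_left_inj' h2] at h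
      linear_combination h
    have hs0 := (mul_eq_zero.mp h2s).resolve_left h2
    exact h5 (by rw [hs, hs0, mul_zero])

theorem ZMod.isSquare_five {p : ℕ} [Fact p.Prime] (hp : p % 5 = 1 ∨ p % 5 = 4) :
    IsSquare (5 : ZMod p) := by
  have : Fact (Nat.Prime 5) := ⟨Nat.prime_five⟩
  have hp2 : p ≠ 2 := by rintro rfl; simp at hp
  have := ZMod.exists_sq_eq_prime_iff_of_mod_four_eq_one (p := 5) (q := p) rfl hp2
  rw [Nat.cast_ofNat] at this
  rw [← this, ← ZMod.natCast_mod]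
  rcases hp with h | h <;> rw [h]
  exacts [⟨1, rfl⟩, ⟨2, rfl⟩]

/-- if `p` is a prime with `p ≡ ±1 (mod 10)`, then `π(p) ∣ p - 1`. -/
theorem pisano_dvd_sub_one (p : ℕ) (hp : p.Prime)
    (h : p % 10 = 1 ∨ p % 10 = 9) :
    pisano p ∣ p - 1 := by
  have : Fact p.Prime := ⟨hp⟩
  have : Fact (Nat.Prime 5) := ⟨Nat.prime_five⟩
  have h2 : (2 : ZMod p) ≠ 0 := by exact_mod_cast ZMod.prime_ne_zero p 2 (by omega)
  have h5 : (5 : ZMod p) ≠ 0 := by exact_mod_cast ZMod.prime_ne_zero p 5 (by omega)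
  obtain ⟨x, y, hx, hy, hxy⟩ := exists_ne_roots_sq_eq_add_one h2 h5 (ZMod.isSquare_five (by omega))
  obtain ⟨h0, h1⟩ := fib_eq_zero_and_fib_succ_eq_one hx hy hxy
    (ZMod.pow_card_sub_one_eq_one (ne_zero_of_sq_eq_add_one hx))
    (ZMod.pow_card_sub_one_eq_one (ne_zero_of_sq_eq_add_one hy))
  refine pisano_dvd_of_fib_add_modEq fun n => ?_
  rw [← ZMod.natCast_eq_natCast_iff]
  exact Nat.cast_fib_add_eq h0 h1 n
end

section
/- If p is a prime with p ≡ 3 (mod 10) or p ≡ 7 (mod 10), then π(p) divides 2(p + 1). -/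
open Polynomial AdjoinRoot

private lemma dec2 : ¬ IsSquare (2 : ZMod 5) := by decide
private lemma dec3 : ¬ IsSquare (3 : ZMod 5) := by decide

private lemma five_not_square (p : ℕ) [Fact p.Prime] (hp2 : p ≠ 2)
    (h : p % 5 = 2 ∨ p % 5 = 3) : ¬ IsSquare (5 : ZMod p) := by
  haveI : Fact (Nat.Prime 5) := ⟨by norm_num⟩
  have key := (ZMod.exists_sq_eq_prime_iff_of_mod_four_eq_one (p := 5) (q := p)
      (by norm_num) hp2)
  rw [show ((5 : ℕ) : ZMod p) = (5 : ZMod p) by norm_cast] at key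
  rw [← key]
  have hc : ((p : ℕ) : ZMod 5) = ((p % 5 : ℕ) : ZMod 5) := (ZMod.natCast_mod p 5).symm
  rcases h with h | h <;> rw [hc, h]
  · rw [show ((2:ℕ) : ZMod 5) = 2 by norm_num]; exact dec2
  · rw [show ((3:ℕ) : ZMod 5) = 3 by norm_num]; exact dec3

private lemma five_pow_eq_neg_one (p : ℕ) [Fact p.Prime] (hp2 : p % 2 = 1) (hp5 : p ≠ 5)
    (hns : ¬ IsSquare (5 : ZMod p)) : (5 : ZMod p) ^ (p / 2) = -1 := by
  have h5ne : (5 : ZMod p) ≠ 0 := by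
    rw [show (5 : ZMod p) = ((5:ℕ) : ZMod p) by norm_cast, Ne,
      ZMod.natCast_eq_zero_iff]
    intro hdvd
    exact hp5 ((Nat.prime_dvd_prime_iff_eq Fact.out (by norm_num)).mp hdvd)
  have hsq : ((5 : ZMod p) ^ (p / 2)) * ((5 : ZMod p) ^ (p / 2)) = 1 := by
    rw [← pow_add]
    have hp1 : 2 ≤ p := (Fact.out : p.Prime).two_le
    have : p / 2 + p / 2 = p - 1 := by omega
    rw [this]
    exact ZMod.pow_card_sub_one_eq_one h5ne
  rcases mul_self_eq_one_iff.mp hsq with h1 | h1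
  · exact absurd ((ZMod.euler_criterion p h5ne).mpr h1) hns
  · exact h1

private noncomputable abbrev fibPoly (p : ℕ) [Fact p.Prime] : (ZMod p)[X] := X ^ 2 - X - 1

private lemma fibPoly_monic (p : ℕ) [Fact p.Prime] : (fibPoly p).Monic := by
  unfold fibPoly; monicity!

private lemma fibPoly_degree (p : ℕ) [Fact p.Prime] : (fibPoly p).degree = 2 := by
  unfold fibPoly; compute_degree!

private lemma coeff_ext (p : ℕ) [Fact p.Prime] {a b c d : ZMod p}
    (h : (of (fibPoly p)) a * root (fibPoly p) + (of (fibPoly p)) b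
       = (of (fibPoly p)) c * root (fibPoly p) + (of (fibPoly p)) d) :
    a = c ∧ b = d := by
  have h' : mk (fibPoly p) (C a * X + C b) = mk (fibPoly p) (C c * X + C d) := by
    simpa [map_add, map_mul, mk_C, mk_X] using h
  rw [mk_eq_mk] at h'
  have hre : (C a * X + C b) - (C c * X + C d) = C (a - c) * X + C (b - d) := by
    rw [C_sub, C_sub]; ring
  rw [hre] at h'
  have hzero : C (a - c) * X + C (b - d) = 0 := by
    by_contra hne
    refine (fibPoly_monic p).not_dvd_of_degree_lt hne ?_ h'
    rw [fibPoly_degree]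
    calc degree (C (a - c) * X + C (b - d)) ≤ 1 := by compute_degree
    _ < 2 := by decide
  constructor
  · have := congrArg (fun r => coeff r 1) hzero
    simpa [sub_eq_zero] using this
  · have := congrArg (fun r => coeff r 0) hzero
    simpa [sub_eq_zero] using this

private lemma root_sq (p : ℕ) [Fact p.Prime] :
    root (fibPoly p) ^ 2 = root (fibPoly p) + 1 := by
  have h0 : (aeval (root (fibPoly p))) (fibPoly p) = 0 := by
    rw [aeval_eq, mk_self]
  simp only [fibPoly, map_sub, map_pow, aeval_X, map_one] at h0
  linear_combination h0

private lemma root_pow_fib (p : ℕ) [Fact p.Prime] (n : ℕ) :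
    root (fibPoly p) ^ (n + 1)
      = (Nat.fib (n+1) : AdjoinRoot (fibPoly p)) * root (fibPoly p)
        + (Nat.fib n : AdjoinRoot (fibPoly p)) := by
  induction n with
  | zero => simp
  | succ n ih =>
    have : root (fibPoly p) ^ (n + 2) = root (fibPoly p) ^ (n+1) * root (fibPoly p) := by ring
    rw [this, ih]
    have hsq := root_sq p
    rw [Nat.fib_add_two]
    push_cast
    linear_combination (Nat.fib (n+1) : AdjoinRoot (fibPoly p)) * hsq

private lemma fib_zmod (p : ℕ) [Fact p.Prime] (hodd : p % 2 = 1) (hp5 : p ≠ 5)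
    (hns : ¬ IsSquare (5 : ZMod p)) :
    ((Nat.fib (p+1) : ZMod p) = 0) ∧ ((Nat.fib (p+2) : ZMod p) = -1) := by
  set K := AdjoinRoot (fibPoly p)
  set φ := root (fibPoly p) with hφdef
  have hinj : Function.Injective (of (fibPoly p)) :=
    of.injective_of_degree_ne_zero (by rw [fibPoly_degree]; decide)
  have hinj' : Function.Injective (algebraMap (ZMod p) K) := hinj
  haveI : CharP K p := charP_of_injective_algebraMap hinj' p
  have hsq : φ ^ 2 = φ + 1 := root_sq p
  have hu : (2 * φ - 1) ^ 2 = 5 := by linear_combination 4 * hsq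
  have hcast5 : ((of (fibPoly p)) (5 : ZMod p)) = (5 : K) := map_ofNat _ 5
  have h5 : (5 : K) ^ (p / 2) = -1 := by
    have h1 := five_pow_eq_neg_one p hodd hp5 hns
    have h2 : ((of (fibPoly p)) ((5 : ZMod p) ^ (p/2))) = ((of (fibPoly p)) (-1 : ZMod p)) := by
      rw [h1]
    rwa [map_pow, map_neg, map_one, hcast5] at h2
  have hup : (2 * φ - 1) ^ p = -(2 * φ - 1) := by
    have hpe : p = 2 * (p / 2) + 1 := by omega
    calc (2 * φ - 1) ^ p = ((2 * φ - 1) ^ 2) ^ (p / 2) * (2 * φ - 1) := by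
          rw [← pow_mul, ← pow_succ, ← hpe]
      _ = -(2 * φ - 1) := by rw [hu, h5]; ring
  have hfrob : (2 * φ - 1) ^ p = 2 * φ ^ p - 1 := by
    rw [sub_pow_char, mul_pow, one_pow]
    congr 1
    have h2 : ((of (fibPoly p)) (2 : ZMod p)) = (2 : K) := map_ofNat _ 2
    have h3 : ((of (fibPoly p)) ((2 : ZMod p) ^ p)) = ((of (fibPoly p)) (2 : ZMod p)) := by
      rw [ZMod.pow_card]
    rw [map_pow, h2] at h3
    rw [h3]
  have h2unit : IsUnit (2 : K) := by
    have hz : IsUnit (2 : ZMod p) := by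
      refine isUnit_iff_ne_zero.mpr ?_
      have : ((2:ℕ) : ZMod p) ≠ 0 := by
        rw [Ne, ZMod.natCast_eq_zero_iff]
        intro hd
        have := (Nat.prime_dvd_prime_iff_eq Fact.out (by norm_num)).mp hd
        omega
      simpa using this
    have := hz.map (of (fibPoly p))
    rwa [map_ofNat] at this
  have hphip : φ ^ p = 1 - φ := by
    refine h2unit.mul_left_cancel ?_
    have h4 : 2 * φ ^ p - 1 = -(2 * φ - 1) := by rw [← hfrob, hup]
    linear_combination h4
  have hp2pow : φ ^ (p + 2) = -φ := by
    have h1 : φ ^ (p + 2) = φ ^ p * φ ^ 2 := by ring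
    rw [h1, hphip]
    linear_combination (-φ) * hsq
  have hfib := root_pow_fib p (p+1)
  rw [show p + 1 + 1 = p + 2 from rfl, hp2pow] at hfib
  have hext := coeff_ext p (a := (-1 : ZMod p)) (b := (0 : ZMod p))
      (c := (Nat.fib (p+2) : ZMod p)) (d := (Nat.fib (p+1) : ZMod p)) ?_
  · exact ⟨hext.2.symm, by rw [← hext.1]⟩
  · simp only [map_neg, map_one, map_zero, map_natCast]
    linear_combination hfib

private lemma pisano_aux_dvd {m k : ℕ} (hk : 0 < k)
    (hper : ∀ n : ℕ, Nat.fib (n + k) ≡ Nat.fib n [MOD m]) :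
    sInf {k : ℕ | 0 < k ∧ ∀ n : ℕ, Nat.fib (n + k) ≡ Nat.fib n [MOD m]} ∣ k := by
  set S := {k : ℕ | 0 < k ∧ ∀ n : ℕ, Nat.fib (n + k) ≡ Nat.fib n [MOD m]} with hS
  have hkS : k ∈ S := ⟨hk, hper⟩
  have hπ : sInf S ∈ S := Nat.sInf_mem ⟨k, hkS⟩
  set π := sInf S with hπdef
  have hmulti : ∀ q n : ℕ, Nat.fib (n + π * q) ≡ Nat.fib n [MOD m] := by
    intro q
    induction q with
    | zero => intro n; simp [Nat.ModEq.refl]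
    | succ q ih =>
      intro n
      have : n + π * (q + 1) = (n + π * q) + π := by ring
      rw [this]
      exact (hπ.2 (n + π * q)).trans (ih n)
  rcases Nat.eq_zero_or_pos (k % π) with hr | hr
  · exact Nat.dvd_of_mod_eq_zero hr
  · exfalso
    have hrS : k % π ∈ S := by
      refine ⟨hr, fun n => ?_⟩
      have heq : n + k % π + π * (k / π) = n + k := by
        have := Nat.div_add_mod k π
        omega
      have h1 := hmulti (k / π) (n + k % π)
      rw [heq] at h1
      exact (h1.symm.trans (hper n))
    have := Nat.sInf_le hrS
    have hlt := Nat.mod_lt k (show 0 < π from hπ.1)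
    omega

/-- if `p` is a prime with `p ≡ ±3 (mod 10)`, then `π(p) ∣ 2(p + 1)`. -/
theorem pisano_dvd_two_mul_add_one (p : ℕ) (hp : p.Prime)
    (h : p % 10 = 3 ∨ p % 10 = 7) :
    pisano p ∣ 2 * (p + 1) := by
  haveI : Fact p.Prime := ⟨hp⟩
  have hodd : p % 2 = 1 := by omega
  have hp5 : p ≠ 5 := by omega
  have hp2 : p ≠ 2 := by omega
  have h5mod : p % 5 = 2 ∨ p % 5 = 3 := by omega
  have hns := five_not_square p hp2 h5mod
  obtain ⟨hf1, hf2⟩ := fib_zmod p hodd hp5 hns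
  -- fib (2*(p+1)) ≡ 0 and fib (2*(p+1)+1) ≡ 1 mod p
  set k := p + 1 with hk
  have h2k : 2 * (p + 1) = k + p + 1 := by omega
  have hfib2k : (Nat.fib (2 * (p+1)) : ZMod p) = 0 := by
    rw [h2k, Nat.fib_add]
    push_cast
    rw [show (Nat.fib k : ZMod p) = 0 from hf1,
        show (Nat.fib (k+1) : ZMod p) = -1 from hf2]
    ring
  have hfib2k1 : (Nat.fib (2 * (p+1) + 1) : ZMod p) = 1 := by
    rw [show 2 * (p+1) + 1 = k + k + 1 by omega, Nat.fib_add]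
    push_cast
    rw [show (Nat.fib k : ZMod p) = 0 from hf1,
        show (Nat.fib (k+1) : ZMod p) = -1 from hf2]
    ring
  have hper : ∀ n : ℕ, Nat.fib (n + 2 * (p+1)) ≡ Nat.fib n [MOD p] := by
    intro n
    rw [← ZMod.natCast_eq_natCast_iff]
    cases n with
    | zero => simpa using hfib2k
    | succ n =>
      have : n + 1 + 2 * (p + 1) = n + 2 * (p+1) + 1 := by omega
      rw [this, Nat.fib_add]
      push_cast
      rw [hfib2k, hfib2k1]
      ring
  exact pisano_aux_dvd (by omega) hper
end

section
/- Let p be a prime and e a positive integer. If π(p^e) ≠ π(p^{e+1}), then for every positive integer i one has π(p^{e+i}) = p^i · π(p^e). -/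
/-!
Reducing modulo `m`, the Fibonacci matrix `Q = !![1, 1; 1, 0]` has order `π(m)`, so `π` is
monotone for divisibility. Write `Q ^ π(p^e) = 1 + p^e A` over `ℤ`; the hypothesis
`π(p^e) ≠ π(p^(e+1))` says that `p ∤ A`. The binomial theorem gives
`(1 + p^j A)^p = 1 + p^(j+1) (A + p B)` as soon as `j + 2 ≤ p j`, so raising to the `p`-th power
raises the exact power of `p` in `Q^n - 1` by one, and at each level the order gets multiplied by
exactly `p`. The only excluded level is `p = 2, e = 1`, which is settled by computing
`π(2) = 3`, `π(4) = 6`, `π(8) = 12` and starting the induction at `4`.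
-/

open Finset

theorem orderOf_eq_sInf {G : Type*} [Monoid G] (x : G) :
    orderOf x = sInf {n | 0 < n ∧ x ^ n = 1} := by
  rw [orderOf, Function.minimalPeriod_eq_sInf_n_pos_IsPeriodicPt]
  simp only [isPeriodicPt_mul_iff_pow_eq_one]

theorem orderOf_eq_prime_mul {G : Type*} [Monoid G] {x : G} {p n : ℕ} (hp : p.Prime)
    (hpn : x ^ (p * n) = 1) (hn : n ∣ orderOf x) (hxn : x ^ n ≠ 1) : orderOf x = p * n := by
  obtain ⟨t, ht⟩ := hn
  have hn0 : 0 < n := Nat.pos_of_ne_zero <| by rintro rfl; exact hxn (pow_zero x)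
  have htp : t ∣ p := by
    rw [← Nat.mul_dvd_mul_iff_left hn0, ← ht, mul_comm]
    exact orderOf_dvd_of_pow_eq_one hpn
  rcases hp.eq_one_or_self_of_dvd t htp with rfl | rfl
  · rw [mul_one] at ht
    exact absurd (ht ▸ pow_orderOf_eq_one x) hxn
  · rw [ht, mul_comm]

theorem exists_one_add_prime_pow_nsmul_pow_eq {R : Type*} [Ring R] {p e : ℕ} (hp : p.Prime)
    (hpe : e + 2 ≤ p * e) (a : R) :
    ∃ b : R, (1 + p ^ e • a) ^ p = 1 + p ^ (e + 1) • a + p ^ (e + 2) • b := by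
  have hchoose : ∀ m ∈ Ico 2 (p + 1), p ^ (e + 2) ∣ p.choose m * p ^ (e * m) := by
    intro m hm
    rw [Finset.mem_Ico] at hm
    rcases (Nat.lt_succ_iff.1 hm.2).lt_or_eq with hlt | hmp
    · rw [pow_succ' p (e + 1)]
      exact mul_dvd_mul (hp.dvd_choose_self (by omega) hlt) (pow_dvd_pow p (by nlinarith))
    · rw [hmp, Nat.choose_self, one_mul]
      exact pow_dvd_pow p (by linarith [mul_comm p e])
  choose! c hc using hchoose
  refine ⟨∑ m ∈ Ico 2 (p + 1), c m • a ^ m, ?_⟩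
  have hp1 : 1 < p + 1 := by have := hp.two_le; omega
  rw [add_comm 1, (Commute.one_right _).add_pow, range_eq_Ico,
    sum_eq_sum_Ico_succ_bot (by omega), sum_eq_sum_Ico_succ_bot hp1, smul_sum]
  simp only [one_pow, mul_one, smul_pow, ← pow_mul, ← nsmul_eq_mul', smul_smul]
  rw [sum_congr rfl fun m hm => by rw [hc m hm]]
  simp only [mul_zero, pow_zero, Nat.choose_zero_right, Nat.choose_one_right, one_mul, pow_one,
    one_smul, ← pow_succ']
  rw [add_assoc]

section ReduceMod

variable {ι : Type*} [Fintype ι] [DecidableEq ι]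

abbrev reduceMod (m : ℕ) : Matrix ι ι ℤ →+* Matrix ι ι (ZMod m) :=
  (Int.castRingHom (ZMod m)).mapMatrix

theorem reduceMod_eq_one_iff {m : ℕ} {M : Matrix ι ι ℤ} :
    reduceMod m M = 1 ↔ ∃ A, M = 1 + m • A := by
  constructor
  · intro h
    refine ⟨Matrix.of fun i j => (M - 1) i j / m, ?_⟩
    ext i j
    have hM : reduceMod m (M - 1) = 0 := by rw [map_sub, h, map_one, sub_self]
    have hdvd : (m : ℤ) ∣ (M - 1) i j :=
      (ZMod.intCast_zmod_eq_zero_iff_dvd _ _).1 (congr_fun₂ hM i j)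
    rw [Matrix.add_apply, Matrix.smul_apply, Matrix.of_apply, nsmul_eq_mul,
      Int.mul_ediv_cancel' hdvd, Matrix.sub_apply, add_sub_cancel]
  · rintro ⟨A, rfl⟩
    rw [map_add, map_one, map_nsmul, ← Nat.cast_smul_eq_nsmul (ZMod m), ZMod.natCast_self,
      zero_smul, add_zero]

theorem reduceMod_pow_prime {p j : ℕ} (hp : p.Prime) (hj : j + 2 ≤ p * j) {M : Matrix ι ι ℤ}
    (h₁ : reduceMod (p ^ j) M = 1) (h₂ : reduceMod (p ^ (j + 1)) M ≠ 1) :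
    reduceMod (p ^ (j + 1)) (M ^ p) = 1 ∧ reduceMod (p ^ (j + 2)) (M ^ p) ≠ 1 := by
  obtain ⟨A, rfl⟩ := reduceMod_eq_one_iff.1 h₁
  obtain ⟨B, hB⟩ := exists_one_add_prime_pow_nsmul_pow_eq hp hj A
  have hpow : (1 + p ^ j • A) ^ p = 1 + p ^ (j + 1) • (A + p • B) := by
    rw [hB, smul_add, smul_smul, ← pow_succ, add_assoc]
  rw [hpow, reduceMod_eq_one_iff, Ne, reduceMod_eq_one_iff]
  refine ⟨⟨_, rfl⟩, ?_⟩
  rintro ⟨C, hC⟩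
  have hAB : A + p • B = p • C := by
    have h := add_left_cancel hC
    rw [pow_succ _ (j + 1), mul_smul] at h
    exact nsmul_right_injective (M := ι → ι → ℤ) (pow_ne_zero (j + 1) hp.ne_zero) h
  apply h₂
  rw [reduceMod_eq_one_iff]
  refine ⟨C - B, ?_⟩
  rw [pow_succ, mul_smul, smul_sub, ← hAB, add_sub_cancel_right]

end ReduceMod

def fibMatrix (R : Type*) [Ring R] : Matrix (Fin 2) (Fin 2) R := !![1, 1; 1, 0]

section FibMatrix

variable {R : Type*} [CommRing R]

theorem fibMatrix_pow (n : ℕ) :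
    fibMatrix R ^ n =
      !![(Nat.fib (n + 1) : R), Nat.fib n; Nat.fib n, Nat.fib (n + 1) - Nat.fib n] := by
  induction n with
  | zero => simp [Matrix.one_fin_two]
  | succ n ih =>
    rw [pow_succ, ih, fibMatrix, Nat.fib_add_two]
    ext i j
    fin_cases i <;> fin_cases j <;> simp [add_comm]

theorem fibMatrix_pow_eq_one_iff {k : ℕ} :
    fibMatrix R ^ k = 1 ↔ (Nat.fib k : R) = 0 ∧ (Nat.fib (k + 1) : R) = 1 := by
  rw [fibMatrix_pow, Matrix.one_fin_two]
  constructor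
  · intro h
    exact ⟨by simpa using congr_fun₂ h 0 1, by simpa using congr_fun₂ h 0 0⟩
  · rintro ⟨h0, h1⟩
    simp [h0, h1]

theorem fibMatrix_pow_eq_one_iff_forall {k : ℕ} :
    fibMatrix R ^ k = 1 ↔ ∀ n, (Nat.fib (n + k) : R) = Nat.fib n := by
  constructor
  · intro h n
    simpa [h, fibMatrix_pow] using congr_fun₂ (pow_add (fibMatrix R) n k) 0 1
  · intro h
    exact fibMatrix_pow_eq_one_iff.2 ⟨by simpa using h 0, by simpa [add_comm] using h 1⟩

theorem RingHom.mapMatrix_fibMatrix {S : Type*} [CommRing S] (f : R →+* S) :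
    f.mapMatrix (fibMatrix R) = fibMatrix S := by
  ext i j
  fin_cases i <;> fin_cases j <;> simp [fibMatrix]

end FibMatrix

theorem pisano_eq_orderOf (m : ℕ) : pisano m = orderOf (fibMatrix (ZMod m)) := by
  simp only [pisano, orderOf_eq_sInf, fibMatrix_pow_eq_one_iff_forall,
    ZMod.natCast_eq_natCast_iff]

theorem pisano_dvd_pisano {m n : ℕ} (h : m ∣ n) : pisano m ∣ pisano n := by
  rw [pisano_eq_orderOf, pisano_eq_orderOf,
    ← (ZMod.castHom h (ZMod m)).mapMatrix_fibMatrix]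
  exact orderOf_map_dvd _ _

theorem pisano_prime_pow_add {p e : ℕ} (hp : p.Prime) (hpe : e + 2 ≤ p * e)
    (h : pisano (p ^ e) ≠ pisano (p ^ (e + 1))) (i : ℕ) :
    pisano (p ^ (e + i)) = p ^ i * pisano (p ^ e) := by
  set k := pisano (p ^ e)
  have hQ (m n : ℕ) : fibMatrix (ZMod m) ^ n = reduceMod m (fibMatrix ℤ ^ n) := by
    rw [map_pow, RingHom.mapMatrix_fibMatrix]
  suffices ∀ i, pisano (p ^ (e + i)) = p ^ i * k ∧
      reduceMod (p ^ (e + i + 1)) (fibMatrix ℤ ^ (p ^ i * k)) ≠ 1 from (this i).1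
  intro i
  induction i with
  | zero =>
    refine ⟨by simp [k], fun h₁ => h (Nat.dvd_antisymm
      (pisano_dvd_pisano (pow_dvd_pow p e.le_succ)) ?_)⟩
    rw [pisano_eq_orderOf]
    exact orderOf_dvd_of_pow_eq_one (by simpa [hQ] using h₁)
  | succ i ih =>
    obtain ⟨hi, hne⟩ := ih
    have hone : reduceMod (p ^ (e + i)) (fibMatrix ℤ ^ (p ^ i * k)) = 1 := by
      rw [← hQ, ← hi, pisano_eq_orderOf, pow_orderOf_eq_one]
    obtain ⟨hone', hne'⟩ := reduceMod_pow_prime hp (by nlinarith [hp.two_le]) hone hne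
    rw [← pow_mul, show p ^ i * k * p = p ^ (i + 1) * k by ring] at hone' hne'
    refine ⟨?_, hne'⟩
    rw [pisano_eq_orderOf, pow_succ', mul_assoc]
    refine orderOf_eq_prime_mul hp ?_ ?_ ?_
    · rw [hQ, ← mul_assoc, ← pow_succ']
      exact hone'
    · rw [← pisano_eq_orderOf, ← hi]
      exact pisano_dvd_pisano (pow_dvd_pow p (by omega))
    · rwa [hQ]

theorem pisano_eq_prime_mul {m p n : ℕ} (hp : p.Prime) (hn : n ∣ pisano m)
    (hpn : (Nat.fib (p * n) : ZMod m) = 0 ∧ (Nat.fib (p * n + 1) : ZMod m) = 1)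
    (hxn : ¬((Nat.fib n : ZMod m) = 0 ∧ (Nat.fib (n + 1) : ZMod m) = 1)) :
    pisano m = p * n := by
  rw [pisano_eq_orderOf] at hn ⊢
  exact orderOf_eq_prime_mul hp (fibMatrix_pow_eq_one_iff.2 hpn) hn
    (fibMatrix_pow_eq_one_iff.not.2 hxn)

theorem pisano_two : pisano 2 = 3 :=
  pisano_eq_prime_mul (n := 1) Nat.prime_three (one_dvd _) (by decide) (by decide)

theorem pisano_four : pisano 4 = 6 :=
  pisano_eq_prime_mul (n := 3) Nat.prime_two (pisano_two ▸ pisano_dvd_pisano (by norm_num))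
    (by decide) (by decide)

theorem pisano_eight : pisano 8 = 12 :=
  pisano_eq_prime_mul (n := 6) Nat.prime_two (pisano_four ▸ pisano_dvd_pisano (by norm_num))
    (by decide) (by decide)

/-- if `p` is prime, `e ≥ 1` and `π(p^e) ≠ π(p^{e+1})`, then
`π(p^{e+i}) = p^i · π(p^e)` for every `i ≥ 1`. -/
theorem pisano_pow_of_ne (p : ℕ) (hp : p.Prime) (e : ℕ) (he : 0 < e)
    (h : pisano (p ^ e) ≠ pisano (p ^ (e + 1))) :
    ∀ i : ℕ, 0 < i → pisano (p ^ (e + i)) = p ^ i * pisano (p ^ e) := by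
  intro i hi
  by_cases hpe : e + 2 ≤ p * e
  · exact pisano_prime_pow_add hp hpe h i
  have hp3 : p < 3 := by nlinarith [hp.two_le]
  obtain rfl : p = 2 := by have := hp.two_le; omega
  obtain rfl : e = 1 := by omega
  obtain ⟨j, rfl⟩ := Nat.exists_eq_add_of_lt hi
  have h48 : pisano (2 ^ 2) ≠ pisano (2 ^ (2 + 1)) := by
    rw [show 2 ^ 2 = 4 by rfl, show 2 ^ (2 + 1) = 8 by rfl, pisano_four, pisano_eight]
    decide
  rw [show 1 + (0 + j + 1) = 2 + j by omega, pisano_prime_pow_add Nat.prime_two le_rfl h48 j,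
    show 2 ^ 2 = 4 by rfl, pisano_four, pow_one, pisano_two]
  ring
end

section
/- Let p be a prime different from 2 and 5 and let e be a positive integer. Then the images of 1 + √5 and 1 − √5 in the quotient ring ℤ[√5]/(p^e) are units, and l(p^e) equals the multiplicative order of the image of (1 + √5)·(1 − √5)^{−1} in the unit group (ℤ[√5]/(p^e))^×. -/
/-- The rank of apparition `l(m)`: the least positive integer `k` such that
`F_k ≡ 0 (mod m)`. -/
noncomputable def rank (m : ℕ) : ℕ :=
  sInf {k : ℕ | 0 < k ∧ m ∣ Nat.fib k}

/-!
Binet's formula, scaled to live in `ℤ[√5]`, reads `(1 + √5)^k - (1 - √5)^k = 2^k F_k √5`.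
Modulo any `q` coprime to `10` both `2` and `√5` (a square root of the unit `5`) are invertible,
so `(1 + √5)^k ≡ (1 - √5)^k` exactly when `q ∣ F_k`. Thus the exponents killing
`(1 + √5)(1 - √5)⁻¹` are the multiples of `l(q)`, and since the quotient ring is finite this
element has positive order, which must then be `l(q)`.
-/

theorem rank_eq_of_dvd_fib_iff {m n : ℕ} (hn : 0 < n) (h : ∀ k, m ∣ Nat.fib k ↔ n ∣ k) :
    rank m = n :=
  le_antisymm (Nat.sInf_le ⟨hn, (h n).2 dvd_rfl⟩)
    (le_csInf ⟨n, hn, (h n).2 dvd_rfl⟩ fun _ ⟨hk, hdvd⟩ => Nat.le_of_dvd hk ((h _).1 hdvd))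

theorem isUnit_natCast_of_coprime {A : Type*} [CommRing A] (q : ℕ) [CharP A q] {n : ℕ}
    (h : n.Coprime q) : IsUnit (n : A) := by
  simpa using (ZMod.unitOfCoprime n h).isUnit.map (ZMod.castHom dvd_rfl A)

section

variable {A : Type*} [CommRing A] {s : A}

theorem one_add_pow_sub_one_sub_pow_eq (hs : s * s = 5) (k : ℕ) :
    (1 + s) ^ k - (1 - s) ^ k = 2 ^ k * Nat.fib k * s := by
  induction k using Nat.twoStepInduction with
  | zero => simp
  | one => simp; ring
  | more n ih₁ ih₂ =>
    rw [Nat.fib_add_two]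
    push_cast
    linear_combination 2 * ih₂ + 4 * ih₁ + ((1 + s) ^ n - (1 - s) ^ n) * hs

theorem isUnit_two_and_isUnit_five (q : ℕ) [CharP A q] (hq : q.Coprime 10) :
    IsUnit (2 : A) ∧ IsUnit (5 : A) := by
  constructor <;>
    exact_mod_cast isUnit_natCast_of_coprime q (hq.coprime_dvd_right (by norm_num)).symm

theorem one_add_pow_eq_one_sub_pow_iff (q : ℕ) [CharP A q] (hq : q.Coprime 10)
    (hs : s * s = 5) (k : ℕ) : (1 + s) ^ k = (1 - s) ^ k ↔ q ∣ Nat.fib k := by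
  obtain ⟨h2, h5⟩ := isUnit_two_and_isUnit_five (A := A) q hq
  have hs_unit : IsUnit s := isUnit_of_mul_isUnit_left (hs ▸ h5)
  rw [← sub_eq_zero, one_add_pow_sub_one_sub_pow_eq hs, hs_unit.mul_left_eq_zero,
    (h2.pow k).mul_right_eq_zero, CharP.cast_eq_zero_iff A q]

theorem isUnit_one_add_and_one_sub (q : ℕ) [CharP A q] (hq : q.Coprime 10) (hs : s * s = 5) :
    IsUnit (1 + s) ∧ IsUnit (1 - s) := by
  have h2 := (isUnit_two_and_isUnit_five (A := A) q hq).1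
  have : (1 + s) * (1 - s) = -(2 * 2) := by linear_combination -hs
  exact IsUnit.mul_iff.1 (this ▸ (h2.mul h2).neg)

end

namespace Zsqrtd

theorem charP_quotient_span_natCast (d : ℤ) (q : ℕ) :
    CharP (ℤ√d ⧸ Ideal.span {(q : ℤ√d)}) q where
  cast_eq_zero_iff n := by
    rw [← map_natCast (Ideal.Quotient.mk _), Ideal.Quotient.eq_zero_iff_mem,
      Ideal.mem_span_singleton, ← Int.cast_natCast, ← Int.cast_natCast n, intCast_dvd_intCast,
      Int.natCast_dvd_natCast]

theorem finite_quotient_span_natCast (d : ℤ) (q : ℕ) [NeZero q] :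
    Finite (ℤ√d ⧸ Ideal.span {(q : ℤ√d)}) := by
  have := charP_quotient_span_natCast d q
  refine Finite.of_surjective (fun ab : ZMod q × ZMod q =>
    (ab.1.cast + ab.2.cast * Ideal.Quotient.mk _ sqrtd : ℤ√d ⧸ Ideal.span {(q : ℤ√d)})) ?_
  rintro ⟨⟨x, y⟩⟩
  refine ⟨(x, y), ?_⟩
  change _ = Ideal.Quotient.mk _ _
  simp [decompose, mul_comm]

end Zsqrtd

open Zsqrtd in
theorem rank_eq_orderOf_of_coprime (q : ℕ) (hq : q.Coprime 10) :
    ∃ u v : (ℤ√5 ⧸ Ideal.span {(q : ℤ√5)})ˣ,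
      (u : ℤ√5 ⧸ Ideal.span {(q : ℤ√5)}) = Ideal.Quotient.mk _ (1 + sqrtd) ∧
        (v : ℤ√5 ⧸ Ideal.span {(q : ℤ√5)}) = Ideal.Quotient.mk _ (1 - sqrtd) ∧
        rank q = orderOf (u * v⁻¹) := by
  have := charP_quotient_span_natCast 5 q
  have : NeZero q := ⟨by rintro rfl; norm_num at hq⟩
  have := finite_quotient_span_natCast 5 q
  have hs : Ideal.Quotient.mk (Ideal.span {(q : ℤ√5)}) sqrtd * Ideal.Quotient.mk _ sqrtd = 5 := by
    rw [← map_mul, dmuld]; rfl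
  obtain ⟨hu, hv⟩ := isUnit_one_add_and_one_sub q hq hs
  refine ⟨hu.unit, hv.unit, by simp, by simp, rank_eq_of_dvd_fib_iff (orderOf_pos _) fun k => ?_⟩
  rw [orderOf_dvd_iff_pow_eq_one, mul_pow, inv_pow, mul_inv_eq_one, Units.ext_iff,
    Units.val_pow_eq_pow_val, Units.val_pow_eq_pow_val, IsUnit.unit_spec, IsUnit.unit_spec,
    one_add_pow_eq_one_sub_pow_iff q hq hs]

theorem rank_eq_orderOf_general (p : ℕ) (hp : p.Prime) (hp2 : p ≠ 2) (hp5 : p ≠ 5)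
    (e : ℕ) :
    ∃ u v : (Zsqrtd 5 ⧸ Ideal.span {((p : Zsqrtd 5)) ^ e})ˣ,
      (u : Zsqrtd 5 ⧸ Ideal.span {((p : Zsqrtd 5)) ^ e}) =
          Ideal.Quotient.mk _ (1 + Zsqrtd.sqrtd) ∧
        (v : Zsqrtd 5 ⧸ Ideal.span {((p : Zsqrtd 5)) ^ e}) =
          Ideal.Quotient.mk _ (1 - Zsqrtd.sqrtd) ∧
        rank (p ^ e) = orderOf (u * v⁻¹) := by
  have hp10 : p.Coprime (2 * 5) := Nat.Coprime.mul_right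
    ((Nat.coprime_primes hp Nat.prime_two).2 hp2) ((Nat.coprime_primes hp (by norm_num)).2 hp5)
  rw [← Nat.cast_pow]
  exact rank_eq_orderOf_of_coprime _ (hp10.pow_left e)

/-- for a prime `p ≠ 2, 5` and `e ≥ 1`, the images of `1 + √5` and
`1 - √5` in `ℤ[√5]/(p^e)` are units, and `l(p^e)` is the multiplicative order of
the image of `(1 + √5)·(1 - √5)⁻¹` in the unit group `(ℤ[√5]/(p^e))ˣ`. -/
theorem rank_eq_orderOf (p : ℕ) (hp : p.Prime) (hp2 : p ≠ 2) (hp5 : p ≠ 5)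
    (e : ℕ) (he : 0 < e) :
    ∃ u v : (Zsqrtd 5 ⧸ Ideal.span {((p : Zsqrtd 5)) ^ e})ˣ,
      (u : Zsqrtd 5 ⧸ Ideal.span {((p : Zsqrtd 5)) ^ e}) =
          Ideal.Quotient.mk _ (1 + Zsqrtd.sqrtd) ∧
        (v : Zsqrtd 5 ⧸ Ideal.span {((p : Zsqrtd 5)) ^ e}) =
          Ideal.Quotient.mk _ (1 - Zsqrtd.sqrtd) ∧
        rank (p ^ e) = orderOf (u * v⁻¹) :=
  rank_eq_orderOf_general p hp hp2 hp5 e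
end

section
/- Let p be a prime different from 2 and 5, and let n be a positive integer. If p divides F_n but p² does not divide F_n, then π(p) ≠ π(p²). -/
def IsFibPeriod (m k : ℕ) : Prop :=
  ∀ n, Nat.fib (n + k) ≡ Nat.fib n [MOD m]

namespace IsFibPeriod

variable {m k j : ℕ}

theorem mul_left (h : IsFibPeriod m k) : ∀ q, IsFibPeriod m (q * k)
  | 0, n => by simp [Nat.ModEq.refl]
  | q + 1, n => by
    rw [Nat.succ_mul, ← Nat.add_assoc]
    exact (h _).trans (mul_left h q n)

theorem mod (hk : IsFibPeriod m k) (hj : IsFibPeriod m j) : IsFibPeriod m (k % j) := fun n ↦ by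
  have := hj.mul_left (k / j) (n + k % j)
  rw [Nat.add_assoc, Nat.mul_comm, Nat.mod_add_div] at this
  exact this.symm.trans (hk n)

theorem dvd_fib (h : IsFibPeriod m k) : m ∣ Nat.fib k := by
  simpa [Nat.modEq_zero_iff_dvd] using h 0

end IsFibPeriod

theorem isFibPeriod_pisano {m : ℕ} (h : 0 < pisano m) : IsFibPeriod m (pisano m) :=
  (Nat.sInf_mem (Nat.nonempty_of_pos_sInf h)).2

theorem pisano_dvd {m k : ℕ} (hk : 0 < k) (h : IsFibPeriod m k) : pisano m ∣ k := by
  let S := {k | 0 < k ∧ IsFibPeriod m k}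
  obtain ⟨hpos, hper⟩ : pisano m ∈ S := Nat.sInf_mem ⟨k, hk, h⟩
  refine Nat.dvd_of_mod_eq_zero (Nat.eq_zero_of_not_pos fun hmod ↦ ?_)
  exact (Nat.mod_lt k hpos).not_ge (Nat.sInf_le (s := S) ⟨hmod, h.mod hper⟩)

theorem Nat.cast_fib_mul_sub {R : Type*} [CommRing R] {φ ψ : R} (hφ : φ ^ 2 = φ + 1)
    (hψ : ψ ^ 2 = ψ + 1) : ∀ n : ℕ, (Nat.fib n : R) * (φ - ψ) = φ ^ n - ψ ^ n
  | 0 => by simp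
  | 1 => by simp
  | n + 2 => by
    rw [Nat.fib_add_two, Nat.cast_add, add_mul, Nat.cast_fib_mul_sub hφ hψ n,
      Nat.cast_fib_mul_sub hφ hψ (n + 1)]
    linear_combination ψ ^ n * hψ - φ ^ n * hφ

theorem isFibPeriod_card_sub_one {K : Type*} [Field K] [Fintype K] {p : ℕ} [CharP K p]
    (h5 : (5 : K) ≠ 0) {φ : K} (hφ : φ ^ 2 = φ + 1) : IsFibPeriod p (Fintype.card K - 1) := by
  intro n
  have hψ : (1 - φ) ^ 2 = (1 - φ) + 1 := by linear_combination hφ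
  have hφ0 : φ ≠ 0 := by rintro rfl; norm_num at hφ
  have hψ0 : 1 - φ ≠ 0 := by intro h; rw [h] at hψ; norm_num at hψ
  -- `φ - ψ = 2φ - 1` is a square root of `5`
  have hdiff : φ - (1 - φ) ≠ 0 := by
    intro h
    apply h5
    linear_combination (φ - (1 - φ)) * h - 4 * hφ
  rw [← CharP.natCast_eq_natCast K p]
  apply mul_right_cancel₀ hdiff
  rw [Nat.cast_fib_mul_sub hφ hψ, Nat.cast_fib_mul_sub hφ hψ, pow_add, pow_add,
    FiniteField.pow_card_sub_one_eq_one φ hφ0, FiniteField.pow_card_sub_one_eq_one _ hψ0,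
    mul_one, mul_one]

open Polynomial in
theorem exists_isFibPeriod_not_dvd {p : ℕ} (hp : p.Prime) (hp5 : p ≠ 5) :
    ∃ k, 0 < k ∧ ¬ p ∣ k ∧ IsFibPeriod p k := by
  have : Fact p.Prime := ⟨hp⟩
  let K := (X ^ 2 - X - 1 : (ZMod p)[X]).SplittingField
  have : Fintype K := Fintype.ofFinite K
  obtain ⟨φ, hφ⟩ : ∃ φ : K, φ ^ 2 = φ + 1 := by
    obtain ⟨φ, hφ⟩ := (SplittingField.splits (X ^ 2 - X - 1 : (ZMod p)[X])).exists_eval_eq_zero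
      (by
        rw [degree_map, show (X ^ 2 - X - 1 : (ZMod p)[X]).degree = 2 by compute_degree!]
        decide)
    exact ⟨φ, by simpa [sub_eq_zero, sub_sub] using hφ⟩
  have h5 : (5 : K) ≠ 0 := by
    exact_mod_cast (CharP.cast_eq_zero_iff K p 5).not.2
      fun h ↦ hp5 ((Nat.prime_dvd_prime_iff_eq hp Nat.prime_five).1 h)
  have hpq : p ∣ Fintype.card K :=
    (CharP.cast_eq_zero_iff K p _).1 (FiniteField.cast_card_eq_zero K)
  have hq : 0 < Fintype.card K - 1 := by have := Fintype.one_lt_card (α := K); omega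
  refine ⟨Fintype.card K - 1, hq, fun h ↦ hp.not_dvd_one ?_, isFibPeriod_card_sub_one h5 hφ⟩
  simpa only [Nat.sub_sub_self Fintype.card_pos] using Nat.dvd_sub hpq h

namespace Nat

theorem fib_mul_add_one_modEq (a : ℕ) : ∀ u, fib (u * a + 1) ≡ fib (a + 1) ^ u [MOD fib a]
  | 0 => by simp [ModEq.refl]
  | u + 1 => by
    rw [succ_mul, fib_add, pow_succ]
    calc fib (u * a) * fib a + fib (u * a + 1) * fib (a + 1)
        ≡ 0 + fib (a + 1) ^ u * fib (a + 1) [MOD fib a] :=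
          (modEq_zero_iff_dvd.2 (dvd_mul_left _ _)).add
            ((fib_mul_add_one_modEq a u).mul_right _)
      _ = fib (a + 1) ^ u * fib (a + 1) := zero_add _

theorem fib_mul_modEq :
    ∀ a u, fib ((u + 1) * a) ≡ (u + 1) * fib a * fib (a + 1) ^ u [MOD fib a ^ 2]
  | 0, u => by simp [ModEq.refl]
  | b + 1, 0 => by simp [ModEq.refl]
  | b + 1, u + 1 => by
    set a := b + 1
    have hb : fib b ≡ fib (a + 1) [MOD fib a] := by
      rw [fib_add_two]; exact add_modEq_right.symm
    have hdvd : fib a ∣ fib ((u + 1) * a) := fib_dvd _ _ (dvd_mul_left _ _)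
    have hsq : fib a ^ 2 ∣ fib ((u + 1) * a) * fib a := by
      rw [sq]; exact mul_dvd_mul_right hdvd _
    have h1 : fib ((u + 1) * a) * fib b
        ≡ (u + 1) * fib a * fib (a + 1) ^ u * fib (a + 1) [MOD fib a ^ 2] :=
      ((hb.mul_left' _).of_dvd hsq).trans ((fib_mul_modEq a u).mul_right _)
    have h2 : fib ((u + 1) * a + 1) * fib a ≡ fib (a + 1) ^ (u + 1) * fib a [MOD fib a ^ 2] := by
      simpa only [sq] using (fib_mul_add_one_modEq a (u + 1)).mul_right' (fib a)
    rw [show (u + 1 + 1) * a = (u + 1) * a + b + 1 by ring, fib_add]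
    convert h1.add h2 using 1
    ring

theorem sq_dvd_fib_of_sq_dvd_fib_mul {p a u : ℕ} (hp : p.Prime) (ha : p ∣ fib a) (hu : ¬ p ∣ u)
    (h : p ^ 2 ∣ fib (u * a)) : p ^ 2 ∣ fib a := by
  obtain ⟨v, rfl⟩ : ∃ v, u = v + 1 := exists_eq_succ_of_ne_zero (by rintro rfl; simp at hu)
  have hsucc : ¬ p ∣ fib (a + 1) := fun h' ↦
    hp.one_lt.ne' (eq_one_of_dvd_coprimes (fib_coprime_fib_succ a) ha h')
  have hcop : Coprime (p ^ 2) ((v + 1) * fib (a + 1) ^ v) :=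
    Coprime.pow_left 2 (Coprime.mul_right ((hp.coprime_iff_not_dvd).2 hu)
      (((hp.coprime_iff_not_dvd).2 hsucc).pow_right v))
  refine hcop.dvd_of_dvd_mul_left ?_
  have := ((fib_mul_modEq a v).of_dvd (pow_dvd_pow_of_dvd ha 2)).dvd_iff (dvd_refl _) |>.1 h
  convert this using 1
  ring

end Nat

theorem pisano_ne_pisano_sq_general (p n : ℕ) (hp : p.Prime) (hp5 : p ≠ 5)
    (h1 : p ∣ Nat.fib n) (h2 : ¬ p ^ 2 ∣ Nat.fib n) :
    pisano p ≠ pisano (p ^ 2) := by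
  intro heq
  obtain ⟨k, hk, hpk, hper⟩ := exists_isFibPeriod_not_dvd hp hp5
  have hdvd : pisano p ∣ k := pisano_dvd hk hper
  have hpos : 0 < pisano (p ^ 2) := heq ▸ Nat.pos_of_dvd_of_pos hdvd hk
  have hpK : ¬ p ∣ pisano (p ^ 2) := heq ▸ fun h ↦ hpk (h.trans hdvd)
  have hK : p ^ 2 ∣ Nat.fib (pisano (p ^ 2)) := (isFibPeriod_pisano hpos).dvd_fib
  set g := Nat.gcd n (pisano (p ^ 2))
  have hg : p ∣ Nat.fib g := by
    rw [Nat.fib_gcd]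
    exact Nat.dvd_gcd h1 ((dvd_pow_self p two_ne_zero).trans hK)
  obtain ⟨u, hu⟩ : g ∣ pisano (p ^ 2) := Nat.gcd_dvd_right _ _
  rw [hu, Nat.mul_comm] at hK
  have hpu : ¬ p ∣ u := fun h ↦ hpK (hu ▸ Dvd.dvd.mul_left h g)
  exact h2 ((Nat.sq_dvd_fib_of_sq_dvd_fib_mul hp hg hpu hK).trans
    (Nat.fib_dvd _ _ (Nat.gcd_dvd_left _ _)))

/-- Main Lemma: if `p ≠ 2, 5` is prime, `n ≥ 1`, `p ∣ F_n` and
`p² ∤ F_n`, then `π(p) ≠ π(p²)`, i.e. `p` is not a Fibonacci-Wieferich prime. -/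
theorem pisano_ne_pisano_sq (p n : ℕ) (hp : p.Prime) (hp2 : p ≠ 2) (hp5 : p ≠ 5)
    (hn : 0 < n) (h1 : p ∣ Nat.fib n) (h2 : ¬ p ^ 2 ∣ Nat.fib n) :
    pisano p ≠ pisano (p ^ 2) :=
  pisano_ne_pisano_sq_general p n hp hp5 h1 h2
end

section
/- Let p be a prime different from 2 and 5, and let n be a positive integer. If p divides F_n but p² does not divide F_n, then l(p²) = p · l(p). -/
/-- Existence form: `fib (k*a+1) = fib(a+1)^k + fib a * s` over ℤ. -/
lemma fibA (a k : ℕ) :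
    ∃ s : ℤ, (Nat.fib (k * a + 1) : ℤ)
      = (Nat.fib (a + 1) : ℤ) ^ k + (Nat.fib a : ℤ) * s := by
  induction k with
  | zero => exact ⟨0, by simp⟩
  | succ k ih =>
    obtain ⟨s, hs⟩ := ih
    obtain ⟨d, hd⟩ := Nat.fib_dvd a (k * a) (dvd_mul_left a k)
    have h := Nat.fib_add (k * a) a
    have e : (k + 1) * a + 1 = k * a + a + 1 := by ring
    refine ⟨(d : ℤ) * Nat.fib a + s * Nat.fib (a+1), ?_⟩
    rw [e, h]
    push_cast [hd]
    rw [hs]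
    ring

/-- Existence form: `fib ((k+1)*a) = (k+1)*fib a*fib(a+1)^k + (fib a)^2 * t` over ℤ. -/
lemma fibB (a : ℕ) (ha : 0 < a) (k : ℕ) :
    ∃ t : ℤ, (Nat.fib ((k + 1) * a) : ℤ)
      = (k + 1) * (Nat.fib a : ℤ) * (Nat.fib (a + 1) : ℤ) ^ k
        + (Nat.fib a : ℤ) ^ 2 * t := by
  induction k with
  | zero => exact ⟨0, by simp⟩
  | succ k ih =>
    obtain ⟨t, ht⟩ := ih
    obtain ⟨s, hs⟩ := fibA a (k + 1)
    obtain ⟨c, rfl⟩ := Nat.exists_eq_succ_of_ne_zero ha.ne'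
    have hc : (Nat.fib c : ℤ) = (Nat.fib (c + 1 + 1) : ℤ) - (Nat.fib (c + 1) : ℤ) := by
      rw [Nat.fib_add_two]; push_cast; ring
    have e : (k + 1 + 1) * (c + 1) = (k + 1) * (c + 1) + c + 1 := by ring
    have h := Nat.fib_add ((k + 1) * (c + 1)) c
    refine ⟨t * ((Nat.fib (c + 1 + 1) : ℤ) - Nat.fib (c + 1))
      - (k + 1) * (Nat.fib (c + 1 + 1) : ℤ) ^ k + s, ?_⟩
    rw [e, h]
    push_cast
    rw [ht, hs, hc]
    ring

lemma rank_mem {m : ℕ} (h : ∃ k, 0 < k ∧ m ∣ Nat.fib k) :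
    0 < rank m ∧ m ∣ Nat.fib (rank m) := Nat.sInf_mem h

lemma rank_dvd {m k : ℕ} (h : ∃ j, 0 < j ∧ m ∣ Nat.fib j)
    (hk : 0 < k) (hdvd : m ∣ Nat.fib k) : rank m ∣ k := by
  obtain ⟨hr, hrm⟩ := rank_mem h
  have hg : m ∣ Nat.fib (Nat.gcd (rank m) k) := by
    rw [Nat.fib_gcd]; exact Nat.dvd_gcd hrm hdvd
  have hgpos : 0 < Nat.gcd (rank m) k := Nat.gcd_pos_of_pos_right _ hk
  have hle : rank m ≤ Nat.gcd (rank m) k := Nat.sInf_le ⟨hgpos, hg⟩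
  have hge : Nat.gcd (rank m) k ≤ rank m := Nat.le_of_dvd hr (Nat.gcd_dvd_left _ _)
  have : Nat.gcd (rank m) k = rank m := le_antisymm hge hle
  rw [← this]; exact Nat.gcd_dvd_right _ _

/-- if `p ≠ 2, 5` is prime, `n ≥ 1`, `p ∣ F_n` and `p² ∤ F_n`,
then `l(p²) = p · l(p)`. -/
theorem rank_sq_eq_mul_rank (p n : ℕ) (hp : p.Prime) (hp2 : p ≠ 2) (hp5 : p ≠ 5)
    (hn : 0 < n) (h1 : p ∣ Nat.fib n) (h2 : ¬ p ^ 2 ∣ Nat.fib n) :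
    rank (p ^ 2) = p * rank p := by
  have hex : ∃ k, 0 < k ∧ p ∣ Nat.fib k := ⟨n, hn, h1⟩
  obtain ⟨hapos, hap⟩ := rank_mem hex
  set a := rank p with ha
  have hppos := hp.pos
  -- p^2 ∣ fib (p * a)
  have key : p ^ 2 ∣ Nat.fib (p * a) := by
    obtain ⟨t, ht⟩ := fibB a hapos (p - 1)
    have hp1 : p - 1 + 1 = p := Nat.succ_pred_eq_of_pos hppos
    rw [hp1] at ht
    have hpc : ((p - 1 : ℕ) : ℤ) + 1 = (p : ℤ) := by
      rw [Nat.cast_sub hppos]; ring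
    rw [hpc] at ht
    obtain ⟨u, hu⟩ := hap
    have hz : ((p : ℤ)) ^ 2 ∣ (Nat.fib (p * a) : ℤ) := by
      refine ⟨(u : ℤ) * (Nat.fib (a + 1) : ℤ) ^ (p - 1) + (u : ℤ) ^ 2 * t, ?_⟩
      rw [ht, hu]
      push_cast
      ring
    exact_mod_cast hz
  have hex2 : ∃ k, 0 < k ∧ p ^ 2 ∣ Nat.fib k :=
    ⟨p * a, Nat.mul_pos hppos hapos, key⟩
  obtain ⟨hbpos, hbp⟩ := rank_mem hex2
  set b := rank (p ^ 2) with hb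
  -- b ∣ p * a
  have hbpa : b ∣ p * a := rank_dvd hex2 (Nat.mul_pos hppos hapos) key
  -- a ∣ b
  have hab : a ∣ b := rank_dvd hex hbpos (dvd_trans (dvd_pow_self p two_ne_zero) hbp)
  -- p^2 ∤ fib a
  have hna : ¬ p ^ 2 ∣ Nat.fib a := by
    intro hcon
    have han : a ∣ n := rank_dvd hex hn h1
    exact h2 (hcon.trans (Nat.fib_dvd a n han))
  have hne : b ≠ a := fun h => hna (h ▸ hbp)
  obtain ⟨c, hc⟩ := hab
  have hcp : c ∣ p := by
    have : a * c ∣ a * p := by rw [← hc, Nat.mul_comm a p]; exact hbpa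
    exact (Nat.mul_dvd_mul_iff_left hapos).mp this
  rcases (Nat.Prime.eq_one_or_self_of_dvd hp c hcp) with h | h
  · exact absurd (by rw [hc, h, Nat.mul_one]) hne
  · rw [hc, h, Nat.mul_comm]
end

section
/- Let U_n = ∏_{p prime, p ∣ F_n, p² ∤ F_n} p denote the squarefree part of the n-th Fibonacci number. If the sequence (U_n)_{n ≥ 1} is unbounded, then there are infinitely many primes p with π(p) ≠ π(p²), i.e., infinitely many primes satisfying Wall's conjecture. -/
-- existence of a "restricted period": F_k ≡ 0, F_{k+1} ≡ 1 mod m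
lemma exists_fib_period (m : ℕ) (hm : 0 < m) :
    ∃ k : ℕ, 0 < k ∧ (m ∣ Nat.fib k) ∧ Nat.fib (k + 1) % m = 1 % m := by
  haveI : NeZero m := ⟨hm.ne'⟩
  let e : Equiv.Perm (ZMod m × ZMod m) :=
    { toFun := fun x => (x.2, x.1 + x.2)
      invFun := fun x => (x.2 - x.1, x.1)
      left_inv := fun x => by simp
      right_inv := fun x => by simp }
  have hk : 0 < orderOf e := orderOf_pos e
  have key : ∀ j : ℕ, (e ^ j) (0, 1) = ((Nat.fib j : ZMod m), (Nat.fib (j+1) : ZMod m)) := by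
    intro j
    induction j with
    | zero => simp
    | succ n ih =>
      rw [pow_succ', Equiv.Perm.mul_apply, ih]
      show ((Nat.fib (n+1) : ZMod m), (Nat.fib n : ZMod m) + Nat.fib (n+1)) = _
      rw [Nat.fib_add_two]
      push_cast
      ring_nf
  have h0 := key (orderOf e)
  rw [pow_orderOf_eq_one] at h0
  have h1 : ((Nat.fib (orderOf e) : ZMod m) = 0) ∧ (Nat.fib (orderOf e + 1) : ZMod m) = 1 := by
    constructor
    · exact (congrArg Prod.fst h0).symm
    · exact (congrArg Prod.snd h0).symm
  refine ⟨orderOf e, hk, ?_, ?_⟩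
  · exact (ZMod.natCast_eq_zero_iff _ _).mp h1.1
  · have := h1.2
    rwa [show (1 : ZMod m) = ((1 : ℕ) : ZMod m) by simp, ZMod.natCast_eq_natCast_iff',] at this


-- a k with F_k ≡ 0, F_{k+1} ≡ 1 is a period
lemma period_of (m k : ℕ) (h0 : Nat.fib k ≡ 0 [MOD m]) (h1 : Nat.fib (k+1) ≡ 1 [MOD m]) :
    ∀ n : ℕ, Nat.fib (n + k) ≡ Nat.fib n [MOD m] := by
  have H : ∀ n : ℕ, Nat.fib (n + k) ≡ Nat.fib n [MOD m] ∧
      Nat.fib (n + 1 + k) ≡ Nat.fib (n + 1) [MOD m] := by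
    intro n
    induction n with
    | zero => exact ⟨by simpa using h0, by rw [Nat.add_comm]; simpa using h1⟩
    | succ n ih =>
      refine ⟨ih.2, ?_⟩
      have : Nat.fib (n + 1 + 1 + k) = Nat.fib (n + k) + Nat.fib (n + 1 + k) := by
        rw [show n + 1 + 1 + k = (n + k) + 2 by ring, Nat.fib_add_two]
        ring_nf
      rw [this, Nat.fib_add_two]
      exact Nat.ModEq.add ih.1 ih.2
  exact fun n => (H n).1


lemma fib_mul_cast {R : Type*} [CommRing R] (α : ℕ) (hα : 1 ≤ α)
    (ha : (Nat.fib α : R) ^ 2 = 0) (c : ℕ) :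
    ((Nat.fib (c * α) : R) = c * (Nat.fib α : R) * (Nat.fib (α+1) : R) ^ (c - 1)) ∧
    ((Nat.fib (c * α + 1) : R) = (Nat.fib (α+1) : R) ^ c) := by
  set a : R := (Nat.fib α : R) with hadef
  set t : R := (Nat.fib (α+1) : R) with htdef
  induction c with
  | zero => simp
  | succ c ih =>
    obtain ⟨α', rfl⟩ : ∃ α', α = α' + 1 := ⟨α - 1, (Nat.succ_pred_eq_of_pos hα).symm⟩
    have hfib' : (Nat.fib α' : R) = t - a := by
      have : Nat.fib (α' + 2) = Nat.fib α' + Nat.fib (α' + 1) := Nat.fib_add_two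
      rw [htdef, hadef]
      push_cast [this]
      ring
    have e1 : (c+1) * (α'+1) = c * (α'+1) + α' + 1 := by ring
    have e2 : (c+1) * (α'+1) + 1 = c * (α'+1) + (α'+1) + 1 := by ring
    have hta : (Nat.fib (α' + 1) : R) = a := rfl
    have htt : (Nat.fib (α' + 1 + 1) : R) = t := rfl
    rcases c with _ | c
    · constructor
      · rw [e1, Nat.fib_add]; push_cast [ih.1, ih.2, hfib', hta]; ring
      · rw [e2, Nat.fib_add]; push_cast [ih.1, ih.2, hta, htt]; ring
    · have hs1 : c + 1 - 1 = c := rfl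
      have hs2 : c + 1 + 1 - 1 = c + 1 := rfl
      constructor
      · rw [e1, Nat.fib_add]
        push_cast [ih.1, ih.2, hfib', hta, hs1, hs2]
        linear_combination (-(c:R) - 1) * t ^ c * ha
      · rw [e2, Nat.fib_add]
        push_cast [ih.1, ih.2, hta, htt, hs1]
        linear_combination ((c:R) + 1) * t ^ c * ha

lemma pisano_mem (m : ℕ) (hm : 0 < m) :
    0 < pisano m ∧ ∀ n : ℕ, Nat.fib (n + pisano m) ≡ Nat.fib n [MOD m] := by
  obtain ⟨k, hk, hd, h1⟩ := exists_fib_period m hm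
  have hne : {k : ℕ | 0 < k ∧ ∀ n : ℕ, Nat.fib (n + k) ≡ Nat.fib n [MOD m]}.Nonempty := by
    refine ⟨k, hk, period_of m k ?_ h1⟩
    exact (Nat.modEq_zero_iff_dvd).mpr hd
  exact Nat.sInf_mem hne

lemma pisano_le (m k : ℕ) (hk : 0 < k) (h : ∀ n : ℕ, Nat.fib (n + k) ≡ Nat.fib n [MOD m]) :
    pisano m ≤ k := Nat.sInf_le ⟨hk, h⟩

lemma wall_of_exact_dvd (p : ℕ) (hp : p.Prime) (n : ℕ) (hn : 1 ≤ n)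
    (hd : p ∣ Nat.fib n) (hnd : ¬ p ^ 2 ∣ Nat.fib n) :
    pisano p ≠ pisano (p ^ 2) := by
  intro hk
  have hp0 : 0 < p := hp.pos
  have hp20 : 0 < p ^ 2 := pow_pos hp0 2
  obtain ⟨hk1pos, hk1⟩ := pisano_mem p hp0
  obtain ⟨hk2pos, hk2⟩ := pisano_mem (p ^ 2) hp20
  set k := pisano (p ^ 2) with hkdef
  rw [hk] at hk1pos hk1
  -- p^2 ∣ fib k
  have hfk2 : p ^ 2 ∣ Nat.fib k := by
    have := hk2 0
    simpa [Nat.modEq_zero_iff_dvd] using this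
  have hfk1 : p ∣ Nat.fib k := dvd_trans (dvd_pow_self p two_ne_zero) hfk2
  -- the rank of apparition α
  have hex : ∃ j, 0 < j ∧ p ∣ Nat.fib j := ⟨k, hk2pos, hfk1⟩
  set α := Nat.find hex with hαdef
  obtain ⟨hαpos, hαdvd⟩ := Nat.find_spec hex
  have rank : ∀ j : ℕ, p ∣ Nat.fib j → α ∣ j := by
    intro j hj
    rcases Nat.eq_zero_or_pos j with rfl | hjpos
    · exact dvd_zero α
    have hg : p ∣ Nat.fib (Nat.gcd α j) := by
      rw [Nat.fib_gcd]
      exact Nat.dvd_gcd hαdvd hj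
    have hgpos : 0 < Nat.gcd α j := Nat.gcd_pos_of_pos_left _ hαpos
    have hgle : Nat.gcd α j ≤ α := Nat.le_of_dvd hαpos (Nat.gcd_dvd_left α j)
    have : ¬ Nat.gcd α j < α := fun hlt => Nat.find_min hex hlt ⟨hgpos, hg⟩
    have hgα : Nat.gcd α j = α := le_antisymm hgle (not_lt.mp this)
    rw [← hgα]
    exact Nat.gcd_dvd_right α j
  have hα1 : 1 ≤ α := hαpos
  -- p does not divide fib (α+1)
  have hcop : ¬ p ∣ Nat.fib (α + 1) := by
    intro hc
    have h1 : p ∣ Nat.gcd (Nat.fib α) (Nat.fib (α+1)) := Nat.dvd_gcd hαdvd hc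
    rw [Nat.fib_coprime_fib_succ α] at h1
    exact hp.one_lt.ne' (Nat.dvd_one.mp h1)
  haveI : Fact p.Prime := ⟨hp⟩
  -- work in ZMod (p^2)
  have ha2 : ((Nat.fib α : ZMod (p^2)))^2 = 0 := by
    have h1 : p^2 ∣ (Nat.fib α)^2 := pow_dvd_pow_of_dvd hαdvd 2
    have h2 := (ZMod.natCast_eq_zero_iff ((Nat.fib α)^2) (p^2)).mpr h1
    push_cast at h2; exact h2
  obtain ⟨c, hc⟩ := rank n hd
  rw [mul_comm] at hc
  have hfn : ((Nat.fib n : ZMod (p^2))) ≠ 0 := by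
    intro h0
    exact hnd ((ZMod.natCast_eq_zero_iff _ _).mp h0)
  have hid_n := fib_mul_cast (R := ZMod (p^2)) α hα1 ha2 c
  have hap2 : ¬ p^2 ∣ Nat.fib α := by
    intro hdd
    apply hfn
    have hz : (Nat.fib α : ZMod (p^2)) = 0 :=
      (ZMod.natCast_eq_zero_iff _ _).mpr hdd
    rw [hc, hid_n.1, hz]; ring
  obtain ⟨u, hu⟩ := hαdvd
  have hpu : ¬ p ∣ u := by
    intro h
    obtain ⟨v, rfl⟩ := h
    exact hap2 ⟨v, by rw [hu]; ring⟩
  obtain ⟨d, hdk⟩ := rank k hfk1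
  have hdpos : 0 < d := by
    rcases Nat.eq_zero_or_pos d with rfl | h
    · omega
    · exact h
  have hid_k := fib_mul_cast (R := ZMod (p^2)) α hα1 ha2 d
  -- t := fib (α+1) is a unit mod p^2 and mod p
  have htu2 : IsUnit ((Nat.fib (α+1) : ZMod (p^2))) := by
    rw [ZMod.isUnit_iff_coprime]
    exact ((hp.coprime_iff_not_dvd.mpr hcop).symm.pow_right 2)
  have htu1 : IsUnit ((Nat.fib (α+1) : ZMod p)) := by
    rw [ZMod.isUnit_iff_coprime]
    exact (hp.coprime_iff_not_dvd.mpr hcop).symm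
  -- from p^2 ∣ fib k : d * a = 0 in ZMod p^2
  have hz2 : ((d : ZMod (p^2)) * (Nat.fib α : ZMod (p^2))) = 0 := by
    have h0 : (Nat.fib k : ZMod (p^2)) = 0 :=
      (ZMod.natCast_eq_zero_iff _ _).mpr hfk2
    rw [hdk, mul_comm α d, hid_k.1] at h0
    exact ((htu2.pow (d-1)).mul_left_eq_zero).mp h0
  have hpd : p ∣ d := by
    have : (((d * Nat.fib α : ℕ)) : ZMod (p^2)) = 0 := by push_cast; exact hz2
    have h1 : p^2 ∣ d * Nat.fib α := (ZMod.natCast_eq_zero_iff _ _).mp this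
    rw [hu] at h1
    have h2 : p * p ∣ p * (d * u) := by
      rw [pow_two] at h1; rw [show p * (d * u) = d * (p * u) by ring]; exact h1
    have h3 : p ∣ d * u := (Nat.mul_dvd_mul_iff_left hp0).mp h2
    exact (hp.dvd_mul.mp h3).resolve_right hpu
  -- mod p
  have ha1 : ((Nat.fib α : ZMod p))^2 = 0 := by
    have : (Nat.fib α : ZMod p) = 0 := (ZMod.natCast_eq_zero_iff _ _).mpr ⟨u, hu⟩
    rw [this]; ring
  have hid_k1 := fib_mul_cast (R := ZMod p) α hα1 ha1 d
  have ht1 : ((Nat.fib (α+1) : ZMod p))^d = 1 := by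
    have h1 : Nat.fib (1 + k) ≡ Nat.fib 1 [MOD p] := hk1 1
    have h2 : (Nat.fib (k + 1) : ZMod p) = ((Nat.fib 1 : ℕ) : ZMod p) := by
      rw [ZMod.natCast_eq_natCast_iff]
      rwa [Nat.add_comm] at h1
    rw [hdk, mul_comm α d, hid_k1.2] at h2
    simpa using h2
  set tu : (ZMod p)ˣ := htu1.unit with htudef
  have htupow : tu ^ d = 1 := by
    ext
    rw [Units.val_pow_eq_pow_val, IsUnit.unit_spec]
    simpa using ht1
  set e := orderOf tu with hedef
  have hepos : 0 < e := orderOf_pos tu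
  have hed : e ∣ d := orderOf_dvd_of_pow_eq_one htupow
  -- e * α is a period mod p
  have hper : ∀ j : ℕ, Nat.fib (j + e * α) ≡ Nat.fib j [MOD p] := by
    apply period_of
    · rw [Nat.modEq_zero_iff_dvd]
      have : Nat.fib α ∣ Nat.fib (e * α) := Nat.fib_dvd _ _ (Dvd.intro_left e rfl)
      exact dvd_trans ⟨u, hu⟩ this
    · have hid_e := fib_mul_cast (R := ZMod p) α hα1 ha1 e
      have h1 : ((Nat.fib (α+1) : ZMod p))^e = 1 := by
        have := congrArg Units.val (pow_orderOf_eq_one tu)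
        push_cast at this
        rw [htu1.unit_spec] at this
        simpa using this
      have h2 : (Nat.fib (e * α + 1) : ZMod p) = ((1:ℕ) : ZMod p) := by
        rw [hid_e.2, h1]; simp
      rwa [ZMod.natCast_eq_natCast_iff] at h2
  have hle : k ≤ e * α := by
    rw [← hk]
    exact pisano_le p (e * α) (Nat.mul_pos hepos hαpos) hper
  have hde : d ≤ e := by
    rw [hdk, mul_comm α d] at hle
    exact Nat.le_of_mul_le_mul_right hle hαpos
  have hdee : d = e := le_antisymm hde (Nat.le_of_dvd hdpos hed)
  -- e divides p - 1
  have hecard : e ∣ p - 1 := by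
    have := orderOf_dvd_card (x := tu)
    rwa [ZMod.card_units_eq_totient, Nat.totient_prime hp] at this
  have hpe : p ≤ e := Nat.le_of_dvd hepos (hdee ▸ hpd)
  have hp2le : 2 ≤ p := hp.two_le
  have := Nat.le_of_dvd (by omega) hecard
  omega

/-- The squarefree part `U_n` of the `n`-th Fibonacci number: the product of
the primes dividing `F_n` exactly once. -/
def U (n : ℕ) : ℕ :=
  ∏ p ∈ (Nat.fib n).primeFactors.filter (fun p => ¬ p ^ 2 ∣ Nat.fib n), p

/-- if the sequence `(U_n)_{n ≥ 1}` of squarefree parts of the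
Fibonacci numbers is unbounded, then there are infinitely many primes `p` with
`π(p) ≠ π(p²)` (infinitely many primes satisfying Wall's conjecture). -/
theorem infinite_wall_primes_of_unbounded
    (h : ∀ B : ℕ, ∃ n : ℕ, 1 ≤ n ∧ B < U n) :
    {p : ℕ | p.Prime ∧ pisano p ≠ pisano (p ^ 2)}.Infinite := by
  by_contra hfin
  rw [Set.not_infinite] at hfin
  obtain ⟨n, hn1, hnB⟩ := h (∏ p ∈ hfin.toFinset, p)
  have hsub : ((Nat.fib n).primeFactors.filter (fun p => ¬ p ^ 2 ∣ Nat.fib n)) ⊆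
      hfin.toFinset := by
    intro q hq
    rw [Finset.mem_filter, Nat.mem_primeFactors] at hq
    obtain ⟨⟨hqp, hqd, _⟩, hq2⟩ := hq
    rw [Set.Finite.mem_toFinset]
    exact ⟨hqp, wall_of_exact_dvd q hqp n hn1 hqd hq2⟩
  have hdvd : U n ∣ ∏ p ∈ hfin.toFinset, p :=
    Finset.prod_dvd_prod_of_subset _ _ _ hsub
  have hpos : 0 < ∏ p ∈ hfin.toFinset, p := by
    apply Finset.prod_pos
    intro p hp
    rw [Set.Finite.mem_toFinset] at hp
    exact hp.1.pos
  have := Nat.le_of_dvd hpos hdvd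
  omega
end

section
/- Let p be a prime different from 2 and 5. Then p is a Fibonacci-Wieferich prime, i.e., π(p) = π(p²), if and only if (1 + √5)^{p²−1} ≡ 2^{p²−1} (mod p²) in the ring ℤ[√5]. -/
open Zsqrtd in
/-- Key identity: `2·(1+√5)^n = ⟨2^n(2F_{n+1} - F_n), 2^n F_n⟩` in `ℤ[√5]`. -/
lemma fw_key (n : ℕ) : 2 * (1 + Zsqrtd.sqrtd : Zsqrtd 5) ^ n =
    ⟨2 ^ n * (2 * Nat.fib (n+1) - Nat.fib n), 2 ^ n * Nat.fib n⟩ := by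
  induction n with
  | zero => ext <;> simp
  | succ n ih =>
    have : (2 : Zsqrtd 5) * (1 + sqrtd) ^ (n+1) = (2 * (1 + sqrtd) ^ n) * (1 + sqrtd) := by ring
    rw [this, ih]
    ext <;> simp [Zsqrtd.re_mul, Zsqrtd.im_mul, Nat.fib_add_two] <;> ring

open Zsqrtd in
/-- Translation: the `ℤ[√5]` congruence is equivalent to Fibonacci congruences. -/
lemma fw_dvd_iff (m n : ℕ) (hm : Nat.Coprime m 2) :
    ((m : Zsqrtd 5) ∣ (1 + sqrtd) ^ n - 2 ^ n) ↔
      ((m:ℤ) ∣ (Nat.fib n : ℤ) ∧ (m:ℤ) ∣ (Nat.fib (n+1) : ℤ) - 1) := by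
  have hcop : IsCoprime (m:ℤ) 2 := Nat.isCoprime_iff_coprime.mpr hm
  have hcpow : ∀ k : ℕ, IsCoprime (m:ℤ) (2 ^ k) := fun k => hcop.pow_right
  have h2 : (2 * ((1 + sqrtd) ^ n - 2 ^ n) : Zsqrtd 5) =
      ⟨2 ^ n * (2 * Nat.fib (n+1) - Nat.fib n) - 2 ^ (n+1), 2 ^ n * Nat.fib n⟩ := by
    have hpow : ((2:Zsqrtd 5)) ^ n = ⟨2^n, 0⟩ := by
      induction n with
      | zero => ext <;> simp
      | succ k ihk => rw [pow_succ, ihk]; ext <;> simp [Zsqrtd.re_mul, Zsqrtd.im_mul] <;> ring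
    rw [mul_sub, fw_key n, hpow]
    ext <;> simp [Zsqrtd.re_mul, Zsqrtd.im_mul] <;> push_cast <;> ring
  have hcast : ((m : ℤ) : Zsqrtd 5) = (m : Zsqrtd 5) := by push_cast; rfl
  constructor
  · intro h
    have h' : (m : Zsqrtd 5) ∣ 2 * ((1 + sqrtd) ^ n - 2 ^ n) := Dvd.dvd.mul_left h 2
    rw [h2, ← hcast, Zsqrtd.intCast_dvd] at h'
    simp only at h'
    obtain ⟨hre, him⟩ := h'
    have hF : (m:ℤ) ∣ (Nat.fib n : ℤ) := (hcpow n).dvd_of_dvd_mul_left him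
    refine ⟨hF, ?_⟩
    have hsum : (m:ℤ) ∣ 2 ^ (n+1) * ((Nat.fib (n+1) : ℤ) - 1) := by
      have hd := dvd_add hre (hF.mul_left ((2:ℤ) ^ n))
      have he : (2:ℤ) ^ n * (2 * Nat.fib (n+1) - Nat.fib n) - 2 ^ (n+1)
          + 2 ^ n * (Nat.fib n : ℤ) = 2 ^ (n+1) * ((Nat.fib (n+1) : ℤ) - 1) := by ring
      rwa [he] at hd
    exact (hcpow (n+1)).dvd_of_dvd_mul_left hsum
  · rintro ⟨h1, h2'⟩
    have key : (m : Zsqrtd 5) ∣ 2 * ((1 + sqrtd) ^ n - 2 ^ n) := by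
      rw [h2, ← hcast, Zsqrtd.intCast_dvd]
      constructor
      · have : (2:ℤ) ^ n * (2 * Nat.fib (n+1) - Nat.fib n) - 2 ^ (n+1)
            = 2 ^ n * 2 * ((Nat.fib (n+1) : ℤ) - 1) - 2 ^ n * (Nat.fib n : ℤ) := by ring
        rw [this]
        exact dvd_sub (h2'.mul_left _) (h1.mul_left _)
      · exact h1.mul_left _
    rw [← hcast, Zsqrtd.intCast_dvd] at key ⊢
    have e1 : ((2:Zsqrtd 5) * ((1 + sqrtd) ^ n - 2 ^ n)).re
        = 2 * ((1 + sqrtd : Zsqrtd 5) ^ n - 2 ^ n).re := by simp [Zsqrtd.re_mul]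
    have e2 : ((2:Zsqrtd 5) * ((1 + sqrtd) ^ n - 2 ^ n)).im
        = 2 * ((1 + sqrtd : Zsqrtd 5) ^ n - 2 ^ n).im := by simp [Zsqrtd.im_mul]
    rw [e1, e2] at key
    exact ⟨hcop.dvd_of_dvd_mul_left key.1, hcop.dvd_of_dvd_mul_left key.2⟩

/-- The "period starts" predicate: `F_k ≡ 0` and `F_{k+1} ≡ 1 (mod m)`. -/
def fwP (m k : ℕ) : Prop := Nat.fib k ≡ 0 [MOD m] ∧ Nat.fib (k + 1) ≡ 1 [MOD m]

lemma fwP_zero (m : ℕ) : fwP m 0 := ⟨by simp [Nat.ModEq.refl], by simp [Nat.ModEq.refl]⟩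

lemma fwP_shift {m k : ℕ} (h : fwP m k) (n : ℕ) : Nat.fib (n + k) ≡ Nat.fib n [MOD m] := by
  cases k with
  | zero => rfl
  | succ k' =>
    have hk' : Nat.fib k' ≡ 1 [MOD m] := by
      have h2 : Nat.fib k' + Nat.fib (k' + 1) ≡ 1 [MOD m] := by
        rw [← Nat.fib_add_two]; exact h.2
      calc Nat.fib k' = Nat.fib k' + 0 := by ring
        _ ≡ Nat.fib k' + Nat.fib (k' + 1) [MOD m] := (Nat.ModEq.refl _).add h.1.symm
        _ ≡ 1 [MOD m] := h2
    have : n + (k' + 1) = n + k' + 1 := rfl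
    rw [this, Nat.fib_add]
    calc Nat.fib n * Nat.fib k' + Nat.fib (n + 1) * Nat.fib (k' + 1)
        ≡ Nat.fib n * 1 + Nat.fib (n + 1) * 0 [MOD m] := (hk'.mul_left _).add (h.1.mul_left _)
      _ = Nat.fib n := by ring

lemma fwP_of_shift {m k : ℕ} (h : ∀ n : ℕ, Nat.fib (n + k) ≡ Nat.fib n [MOD m]) : fwP m k :=
  ⟨by simpa using h 0, by simpa [Nat.add_comm] using h 1⟩

lemma fwP_add {m a b : ℕ} (ha : fwP m a) (hb : fwP m b) : fwP m (a + b) :=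
  fwP_of_shift fun n => by
    calc Nat.fib (n + (a + b)) = Nat.fib (n + b + a) := by ring_nf
      _ ≡ Nat.fib (n + b) [MOD m] := fwP_shift ha _
      _ ≡ Nat.fib n [MOD m] := fwP_shift hb _

lemma fwP_sub {m a b : ℕ} (ha : fwP m a) (hab : fwP m (a + b)) : fwP m b := by
  constructor
  · calc Nat.fib b = Nat.fib (b + 0) := by ring_nf
      _ ≡ Nat.fib (b + a) [MOD m] := (fwP_shift ha b).symm
      _ = Nat.fib (0 + (a + b)) := by ring_nf
      _ ≡ Nat.fib 0 [MOD m] := fwP_shift hab 0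
      _ = 0 := rfl
  · calc Nat.fib (b + 1) ≡ Nat.fib (b + 1 + a) [MOD m] := (fwP_shift ha _).symm
      _ = Nat.fib (1 + (a + b)) := by ring_nf
      _ ≡ Nat.fib 1 [MOD m] := fwP_shift hab 1
      _ = 1 := rfl

lemma fwP_exists (m : ℕ) (hm : 0 < m) : ∃ k, 0 < k ∧ fwP m k := by
  haveI : NeZero m := ⟨hm.ne'⟩
  obtain ⟨i, j, hne, hij⟩ := Finite.exists_ne_map_eq_of_infinite
    (fun n : ℕ => ((Nat.fib n : ZMod m), (Nat.fib (n+1) : ZMod m)))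
  wlog hlt : j < i generalizing i j
  · exact this j i hne.symm hij.symm (by omega)
  have hdesc : ∀ t, t ≤ j →
      ((Nat.fib (j - t) : ZMod m), (Nat.fib (j - t + 1) : ZMod m))
        = ((Nat.fib (i - t) : ZMod m), (Nat.fib (i - t + 1) : ZMod m)) := by
    intro t ht
    induction t with
    | zero => simpa using hij.symm
    | succ s ihs =>
      have hs := ihs (by omega)
      have e1 : j - s = (j - (s+1)) + 1 := by omega
      have e2 : i - s = (i - (s+1)) + 1 := by omega
      rw [e1, e2] at hs
      have hs1 : ((Nat.fib (j - (s+1) + 1) : ZMod m)) = (Nat.fib (i - (s+1) + 1) : ZMod m) :=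
        congrArg Prod.fst hs
      have hs2 : ((Nat.fib (j - (s+1) + 1 + 1) : ZMod m)) = (Nat.fib (i - (s+1) + 1 + 1) : ZMod m) :=
        congrArg Prod.snd hs
      have key : ∀ n : ℕ, (Nat.fib n : ZMod m)
          = (Nat.fib (n + 2) : ZMod m) - (Nat.fib (n + 1) : ZMod m) := by
        intro n; rw [Nat.fib_add_two]; push_cast; ring
      have : (Nat.fib (j - (s+1)) : ZMod m) = (Nat.fib (i - (s+1)) : ZMod m) := by
        rw [key, key (i - (s+1)), hs2, hs1]
      exact Prod.ext this hs1
  have hfin := hdesc j le_rfl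
  simp only [Nat.sub_self] at hfin
  refine ⟨i - j, by omega, ?_, ?_⟩
  · have h1 : ((Nat.fib 0 : ZMod m)) = (Nat.fib (i - j) : ZMod m) := congrArg Prod.fst hfin
    rw [← ZMod.natCast_eq_natCast_iff]
    simpa using h1.symm
  · have h2 : ((Nat.fib 1 : ZMod m)) = (Nat.fib (i - j + 1) : ZMod m) := congrArg Prod.snd hfin
    rw [← ZMod.natCast_eq_natCast_iff]
    simpa using h2.symm

lemma pisano_mem_s17 (m : ℕ) (hm : 0 < m) : 0 < pisano m ∧ fwP m (pisano m) := by
  obtain ⟨k, hk, hP⟩ := fwP_exists m hm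
  have hne : {k : ℕ | 0 < k ∧ ∀ n : ℕ, Nat.fib (n + k) ≡ Nat.fib n [MOD m]}.Nonempty :=
    ⟨k, hk, fwP_shift hP⟩
  have h := Nat.sInf_mem hne
  exact ⟨h.1, fwP_of_shift h.2⟩

lemma pisano_dvd_iff (m k : ℕ) (hm : 0 < m) : pisano m ∣ k ↔ fwP m k := by
  obtain ⟨hpos, hP⟩ := pisano_mem_s17 m hm
  constructor
  · rintro ⟨t, rfl⟩
    induction t with
    | zero => exact fwP_zero m
    | succ s ihs => rw [Nat.mul_succ]; exact fwP_add ihs hP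
  · intro h
    induction k using Nat.strong_induction_on with
    | _ k ih =>
      rcases Nat.eq_zero_or_pos k with rfl | hk
      · exact dvd_zero _
      have hge : pisano m ≤ k := by
        unfold pisano
        exact Nat.sInf_le ⟨hk, fun n => fwP_shift h n⟩
      have hsub : fwP m (k - pisano m) := fwP_sub hP (by rwa [Nat.add_sub_cancel' hge])
      obtain ⟨t, ht⟩ := ih (k - pisano m) (by omega) hsub
      exact ⟨t + 1, by rw [Nat.mul_succ]; omega⟩

open Zsqrtd Ideal in
/-- Frobenius: `(1+√5)^(p²) ≡ 1+√5 (mod p)` in `ℤ[√5]`. -/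
lemma fw_frob (p : ℕ) (hp : p.Prime) (hp2 : p ≠ 2) (hp5 : p ≠ 5) :
    (p : Zsqrtd 5) ∣ (1 + sqrtd) ^ (p ^ 2) - (1 + sqrtd) := by
  haveI : Fact p.Prime := ⟨hp⟩
  have hnu : (p : Zsqrtd 5) ∈ nonunits (Zsqrtd 5) := by
    intro hu
    have : (p : Zsqrtd 5) ∣ 1 := isUnit_iff_dvd_one.mp hu
    have hc : ((p : ℤ) : Zsqrtd 5) ∣ 1 := by push_cast; exact_mod_cast this
    rw [Zsqrtd.intCast_dvd] at hc
    have : (p:ℤ) ∣ 1 := by simpa using hc.1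
    have h1 := Int.le_of_dvd one_pos this
    have h2 := hp.two_le
    omega
  haveI hchar := CharP.quotient (Zsqrtd 5) p hnu
  set I : Ideal (Zsqrtd 5) := Ideal.span {(p : Zsqrtd 5)} with hI
  let f : Zsqrtd 5 →+* (Zsqrtd 5 ⧸ I) := Ideal.Quotient.mk I
  set s : Zsqrtd 5 ⧸ I := f sqrtd with hs
  obtain ⟨u, hu⟩ := Nat.Prime.odd_of_ne_two hp hp2
  have hs2 : s * s = (5 : Zsqrtd 5 ⧸ I) := by
    rw [hs, ← _root_.map_mul, Zsqrtd.dmuld, map_intCast]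
    norm_num
  have hsp : s ^ p = (5 : Zsqrtd 5 ⧸ I) ^ u * s := by
    rw [hu, pow_succ, pow_mul, show s ^ 2 = (5:Zsqrtd 5 ⧸ I) by rw [sq, hs2]]
  have h5 : (5 : Zsqrtd 5 ⧸ I) ^ (p - 1) = 1 := by
    have h5z : (5 : ZMod p) ≠ 0 := by
      intro h
      have : (p:ℕ) ∣ 5 := (ZMod.natCast_eq_zero_iff 5 p).mp (by exact_mod_cast h)
      exact hp5 ((Nat.prime_dvd_prime_iff_eq hp (by norm_num)).mp this)
    have hfer : (5 : ZMod p) ^ (p - 1) = 1 := ZMod.pow_card_sub_one_eq_one h5z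
    have g : ZMod p →+* Zsqrtd 5 ⧸ I := ZMod.castHom dvd_rfl _
    calc (5 : Zsqrtd 5 ⧸ I) ^ (p-1) = g ((5 : ZMod p) ^ (p-1)) := by
          rw [map_pow, map_ofNat]
      _ = 1 := by rw [hfer, map_one]
  have hX : (f (1 + sqrtd)) ^ (p ^ 2) = f (1 + sqrtd) := by
    have hXp : (f (1 + sqrtd)) ^ p = 1 + (5 : Zsqrtd 5 ⧸ I) ^ u * s := by
      rw [map_add, map_one, add_pow_char, one_pow, hsp]
    have hcs : ((5 : Zsqrtd 5 ⧸ I) ^ u * s) ^ p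
        = (5:Zsqrtd 5 ⧸ I) ^ (u * p) * ((5:Zsqrtd 5 ⧸ I) ^ u * s) := by
      rw [mul_pow, hsp]; ring
    have h5up : (5 : Zsqrtd 5 ⧸ I) ^ (u * p) * (5:Zsqrtd 5 ⧸ I) ^ u = 1 := by
      rw [← pow_add]
      have h1 : p - 1 = 2 * u := by omega
      have h2 : (p + 1) / 2 = u + 1 := by omega
      have : u * p + u = (p - 1) * ((p+1)/2) := by rw [h1, h2, hu]; ring
      rw [this, pow_mul, h5, one_pow]
    calc (f (1 + sqrtd)) ^ (p ^ 2) = ((f (1 + sqrtd)) ^ p) ^ p := by rw [← pow_mul, sq]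
      _ = 1 + (5:Zsqrtd 5 ⧸ I) ^ (u*p) * ((5:Zsqrtd 5 ⧸ I) ^ u * s) := by
          rw [hXp, add_pow_char, one_pow, hcs]
      _ = 1 + s := by rw [← mul_assoc, h5up, one_mul]
      _ = f (1 + sqrtd) := by rw [map_add, map_one]
  have hmem : (1 + sqrtd : Zsqrtd 5) ^ (p ^ 2) - (1 + sqrtd) ∈ I := by
    rw [← Ideal.Quotient.eq_zero_iff_mem]
    have : f ((1 + sqrtd : Zsqrtd 5) ^ (p ^ 2) - (1 + sqrtd))
        = (f (1+sqrtd)) ^ (p^2) - f (1+sqrtd) := by rw [map_sub, map_pow]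
    rw [show (Ideal.Quotient.mk I) ((1 + sqrtd : Zsqrtd 5) ^ (p ^ 2) - (1 + sqrtd))
        = f ((1 + sqrtd : Zsqrtd 5) ^ (p ^ 2) - (1 + sqrtd)) from rfl, this, hX, sub_self]
  exact (Ideal.mem_span_singleton.mp (hI ▸ hmem))

open Zsqrtd in
/-- `π(p) ∣ p² - 1`, in `ℤ[√5]` form. -/
lemma fw_base (p : ℕ) (hp : p.Prime) (hp2 : p ≠ 2) (hp5 : p ≠ 5) :
    (p : Zsqrtd 5) ∣ (1 + sqrtd) ^ (p ^ 2 - 1) - 2 ^ (p ^ 2 - 1) := by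
  haveI : Fact p.Prime := ⟨hp⟩
  set N := p ^ 2 - 1 with hNdef
  have hppos := hp.two_le
  have hN : p ^ 2 = N + 1 := by
    have : 1 ≤ p ^ 2 := Nat.one_le_pow _ _ hp.pos
    omega
  have hcop : IsCoprime ((p:ℤ)) 2 :=
    Nat.isCoprime_iff_coprime.mpr ((Nat.coprime_primes hp Nat.prime_two).mpr hp2)
  have h1 := fw_frob p hp hp2 hp5
  rw [hN] at h1
  have hxy : ((1 + sqrtd : Zsqrtd 5)) * (1 - sqrtd) = (-4 : Zsqrtd 5) := by
    ext <;> simp [Zsqrtd.re_mul, Zsqrtd.im_mul]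
  have h2 : (p : Zsqrtd 5) ∣ ((1 + sqrtd) ^ N - 1) * (-4) := by
    have e : ((1 + sqrtd : Zsqrtd 5) ^ (N+1) - (1 + sqrtd)) * (1 - sqrtd)
        = ((1 + sqrtd) ^ N - 1) * ((1 + sqrtd) * (1 - sqrtd)) := by ring
    have := h1.mul_right (1 - sqrtd)
    rw [e, hxy] at this
    exact this
  have hcast : ((p : ℤ) : Zsqrtd 5) = (p : Zsqrtd 5) := by push_cast; rfl
  have h3 : (p : Zsqrtd 5) ∣ (1 + sqrtd) ^ N - 1 := by
    rw [← hcast, Zsqrtd.intCast_dvd] at h2 ⊢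
    set w : Zsqrtd 5 := (1 + sqrtd) ^ N - 1 with hw
    have hre : (w * (-4 : Zsqrtd 5)).re = w.re * (-4) := by simp [Zsqrtd.re_mul]
    have him : (w * (-4 : Zsqrtd 5)).im = w.im * (-4) := by simp [Zsqrtd.im_mul]
    rw [hre, him] at h2
    have hc4 : IsCoprime ((p:ℤ)) (-4 : ℤ) := by
      have : IsCoprime ((p:ℤ)) ((2:ℤ) ^ 2) := hcop.pow_right
      norm_num at this
      exact this.neg_right
    exact ⟨hc4.dvd_of_dvd_mul_right h2.1, hc4.dvd_of_dvd_mul_right h2.2⟩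
  have hN2 : N = (p - 1) * (p + 1) := by
    obtain ⟨q, hq⟩ : ∃ q, p = q + 1 := ⟨p - 1, by omega⟩
    subst hq
    have h : (q+1) ^ 2 = q * (q+2) + 1 := by ring
    have h2' : (q+1-1) * ((q+1)+1) = q * (q+2) := by rw [Nat.add_sub_cancel]
    omega
  have h4 : (p : ℤ) ∣ (2 ^ N - 1 : ℤ) := by
    have h2z : (2 : ZMod p) ≠ 0 := by
      intro h
      have : (p:ℕ) ∣ 2 := (ZMod.natCast_eq_zero_iff 2 p).mp (by exact_mod_cast h)
      exact hp2 ((Nat.prime_dvd_prime_iff_eq hp Nat.prime_two).mp this)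
    have hfer : (2 : ZMod p) ^ (p - 1) = 1 := ZMod.pow_card_sub_one_eq_one h2z
    have hpowN : (2 : ZMod p) ^ N = 1 := by rw [hN2, pow_mul, hfer, one_pow]
    rw [← ZMod.intCast_zmod_eq_zero_iff_dvd]
    push_cast
    rw [hpowN, sub_self]
  have hsplit : (1 + sqrtd : Zsqrtd 5) ^ N - 2 ^ N
      = ((1 + sqrtd) ^ N - 1) - (((2 ^ N - 1 : ℤ)) : Zsqrtd 5) := by
    push_cast
    ring
  rw [hsplit]
  refine dvd_sub h3 ?_
  rw [← hcast]
  exact (Zsqrtd.intCast_dvd_intCast _ _).mpr h4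

lemma fwP_iff_int (m k : ℕ) :
    fwP m k ↔ ((m:ℤ) ∣ (Nat.fib k : ℤ) ∧ (m:ℤ) ∣ (Nat.fib (k+1) : ℤ) - 1) := by
  unfold fwP
  constructor
  · rintro ⟨h1, h2⟩
    refine ⟨?_, ?_⟩
    · have := (Nat.modEq_zero_iff_dvd).mp h1
      exact_mod_cast this
    · have := (Nat.modEq_iff_dvd (n := m)).mp h2.symm
      simpa using this
  · rintro ⟨h1, h2⟩
    refine ⟨?_, ?_⟩
    · rw [Nat.modEq_zero_iff_dvd]
      exact_mod_cast h1
    · have : (m:ℤ) ∣ (Nat.fib (k+1) : ℤ) - (1:ℕ) := by simpa using h2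
      exact ((Nat.modEq_iff_dvd (n := m)).mpr this).symm

/-- a prime `p ≠ 2, 5` is a Fibonacci-Wieferich prime, i.e.
`π(p) = π(p²)`, if and only if `(1 + √5)^(p²-1) ≡ 2^(p²-1) (mod p²)` in `ℤ[√5]`
(equivalently, `α^(p²-1) ≡ 1 (mod p²)` for `α = (1+√5)/2`). -/
theorem fibonacci_wieferich_iff (p : ℕ) (hp : p.Prime) (hp2 : p ≠ 2) (hp5 : p ≠ 5) :
    pisano p = pisano (p ^ 2) ↔
      ((p : Zsqrtd 5)) ^ 2 ∣
        (1 + Zsqrtd.sqrtd) ^ (p ^ 2 - 1) - 2 ^ (p ^ 2 - 1) := by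
  haveI : Fact p.Prime := ⟨hp⟩
  have hppos : 0 < p := hp.pos
  have hp2pos : 0 < p ^ 2 := pow_pos hppos 2
  have hcop2 : Nat.Coprime p 2 := (Nat.coprime_primes hp Nat.prime_two).mpr hp2
  have hcopp2 : Nat.Coprime (p ^ 2) 2 := hcop2.pow_left 2
  set N := p ^ 2 - 1 with hNdef
  have hcastsq : ((p ^ 2 : ℕ) : Zsqrtd 5) = ((p : Zsqrtd 5)) ^ 2 := by push_cast; ring
  have hRHS : (((p : Zsqrtd 5)) ^ 2 ∣ (1 + Zsqrtd.sqrtd) ^ N - 2 ^ N) ↔ fwP (p ^ 2) N := by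
    rw [← hcastsq, fw_dvd_iff (p ^ 2) N hcopp2, fwP_iff_int]
  -- π(p) ∣ N
  have f1 : pisano p ∣ N :=
    (pisano_dvd_iff p N hppos).mpr
      ((fwP_iff_int p N).mpr ((fw_dvd_iff p N hcop2).mp (fw_base p hp hp2 hp5)))
  -- π(p) ∣ π(p²)
  have f2 : pisano p ∣ pisano (p ^ 2) := by
    refine (pisano_dvd_iff p _ hppos).mpr ?_
    obtain ⟨h1, h2⟩ := (pisano_mem_s17 (p ^ 2) hp2pos).2
    have hd : p ∣ p ^ 2 := dvd_pow_self p two_ne_zero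
    exact ⟨h1.of_dvd hd, h2.of_dvd hd⟩
  -- π(p²) ∣ p · π(p)  (Wall's theorem step)
  have f3 : pisano (p ^ 2) ∣ pisano p * p := by
    have hk : fwP p (pisano p) := (pisano_mem_s17 p hppos).2
    have hdvd1 : (p : Zsqrtd 5) ∣ (1 + Zsqrtd.sqrtd) ^ (pisano p) - 2 ^ (pisano p) :=
      (fw_dvd_iff p _ hcop2).mpr ((fwP_iff_int p _).mp hk)
    have hsq := dvd_sub_pow_of_dvd_sub hdvd1 1
    rw [pow_one, ← pow_mul, ← pow_mul] at hsq
    exact (pisano_dvd_iff (p ^ 2) _ hp2pos).mpr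
      ((fwP_iff_int (p ^ 2) _).mpr ((fw_dvd_iff (p ^ 2) _ hcopp2).mp (hcastsq ▸ hsq)))
  constructor
  · intro heq
    have hKN : pisano (p ^ 2) ∣ N := heq ▸ f1
    exact hRHS.mpr ((pisano_dvd_iff (p ^ 2) N hp2pos).mp hKN)
  · intro h
    have hKN : pisano (p ^ 2) ∣ N := (pisano_dvd_iff (p ^ 2) N hp2pos).mpr (hRHS.mp h)
    obtain ⟨t, ht⟩ := f2
    have hkpos : 0 < pisano p := (pisano_mem_s17 p hppos).1
    have htp : t ∣ p := by
      have h1 : pisano p * t ∣ pisano p * p := ht ▸ f3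
      exact (Nat.mul_dvd_mul_iff_left hkpos).mp h1
    rcases (Nat.dvd_prime hp).mp htp with h1 | h1
    · rw [h1, mul_one] at ht
      exact ht.symm
    · exfalso
      have hpK : p ∣ pisano (p ^ 2) := ⟨pisano p, by rw [ht, h1]; ring⟩
      have hpN : p ∣ N := hpK.trans hKN
      have hone : p ∣ 1 := by
        have hsub : p ∣ p ^ 2 - N := Nat.dvd_sub (dvd_pow_self p two_ne_zero) hpN
        have : p ^ 2 - N = 1 := by
          have : 1 ≤ p ^ 2 := Nat.one_le_pow _ _ hppos
          omega
        rwa [this] at hsub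
      have hle := Nat.le_of_dvd one_pos hone
      have h2le := hp.two_le
      omega
end
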